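/- arXiv:1106.1928 — 4 statements merged into one kernel-verified Lean document; each statement's English description precedes it below -/
import Mathlib

section
/- Let β = (β_1,…,β_ℓ) be a weak composition of k with β_r ≤ α_r for all r. Then the following identity holds in ℤ[t_1,…,t_ℓ]: (Σ_{λ : β(λ)=β} wt(λ;α,k)) · ∏_{r=1}^ℓ ∏_{i=0}^{β_r−1} (t_r^{q^{β_r}} − t_r^{q^i}) = (∏_{r=1}^ℓ ∏_{i=0}^{β_r−1} (t_r^{q^{α_r}} − t_r^{q^i})) · ∏_{1≤r<s≤ℓ} ∏_{j=0}^{β_r−1} ∏_{i=0}^{α_s−β_s−1} [t_r^{q^{i+j}}, t_s^{q^{i+β_r}}]_q; that is, Σ_{λ:β(λ)=β} wt(λ;α,k) factors as (∏_{r=1}^ℓ ∏_{i=0}^{β_r−1} (t_r^{q^{α_r}} − t_r^{q^i})/(t_r^{q^{β_r}} − t_r^{q^i})) · ∏_{1≤r<s≤ℓ} ∏_{j=0}^{β_r−1} ∏_{i=0}^{α_s−β_s−1} [t_r^{q^{i+j}}, t_s^{q^{i+β_r}}]_q. -/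
/-!
If `β(λ) = β`, the pivots of the rows `β_1 + ⋯ + β_{r-1} < i ≤ β_1 + ⋯ + β_r` are exactly the
pivots in column block `r`. Hence each block `λ^{r,s}` with `r < s` is the full
`β_r × (α_s - β_s)` rectangle, the blocks with `r > s` are empty, and `λ` is determined by its
diagonal blocks `λ^{r,r}`, which range independently over all partitions in the
`β_r × (α_r - β_r)` boxes. So `wt(λ;α,k)` is a constant off-diagonal product times
`∏_r wt(λ^{r,r})`, and the sum over `λ` is a product of one-block sums. For a single block,
`[a,b]_q (a - b) = a^q - b^q` telescopes the weight of a row of length `μ_j` (at height `j`)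
times `t^{q^β} - t^{q^j}` into `t^{q^{μ_j+β}} - t^{q^{μ_j+j}}`, and the sum over `μ` of the
product of these differences telescopes again, one row at a time.
-/

open scoped Classical

noncomputable section

namespace CSP

/-- `[a,b]_Q := Σ_{i+j=Q-1} a^i b^j`. -/
def qbr {R : Type*} [CommRing R] (Q : ℕ) (a b : R) : R :=
  ∑ i ∈ Finset.range Q, a ^ i * b ^ (Q - 1 - i)

variable (q n k ℓ : ℕ) (α : Fin ℓ → ℕ)

/-- Sum of the parts of `α` strictly after `j`. -/
def tailSum (j : Fin ℓ) : ℕ := ∑ j' ∈ Finset.univ.filter (fun j' => j < j'), α j'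

/-- The (1-indexed) column `c` lies in column block `j` (blocks labeled from right to left). -/
def colInBlock (c : ℕ) (j : Fin ℓ) : Prop :=
  tailSum ℓ α j < c ∧ c ≤ tailSum ℓ α j + α j

/-- The (1-indexed) pivot column of row `i` : `p_i = λ_i + k - i + 1`. -/
def pivotCol (l : Fin k → ℕ) (i : Fin k) : ℕ := l i + k - (i : ℕ)

/-- `c` is a pivot column of the diagram of `l`. -/
def isPivotCol (l : Fin k → ℕ) (c : ℕ) : Prop := ∃ i : Fin k, pivotCol k l i = c

/-- `β(λ)_r` : the number of pivots lying in column block `r`. -/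
def betaOf (l : Fin k → ℕ) (r : Fin ℓ) : ℕ :=
  (Finset.univ.filter (fun i : Fin k => colInBlock ℓ α (pivotCol k l i) r)).card

/-- `B_r = β_1 + ⋯ + β_r`. -/
def betaPartial (l : Fin k → ℕ) (r : Fin ℓ) : ℕ :=
  ∑ r' ∈ Finset.univ.filter (fun r' => r' ≤ r), betaOf k ℓ α l r'

/-- The horizontal coordinate `i(x)` of a star in column `c` of column block `s`. -/
def ixc (l : Fin k → ℕ) (s : Fin ℓ) (c : ℕ) : ℕ :=
  ((Finset.Icc 1 n).filter
    (fun c' => colInBlock ℓ α c' s ∧ c' < c ∧ ¬ isPivotCol k l c')).card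

/-- The weight `wt(λ;α,k)`, as a product over the stars of the reduced
row-echelon diagram of `λ`. -/
def wt {R : Type*} [CommRing R] (l : Fin k → ℕ) (t : Fin ℓ → R) : R :=
  ∏ r : Fin ℓ, ∏ s : Fin ℓ, ∏ i : Fin k, ∏ c ∈ Finset.Icc 1 n,
    if colInBlock ℓ α (pivotCol k l i) r ∧ colInBlock ℓ α c s ∧
        c < pivotCol k l i ∧ ¬ isPivotCol k l c then
      qbr q
        (t r ^ q ^ (ixc n k ℓ α l s c + (betaPartial k ℓ α l r - ((i : ℕ) + 1))))
        (t s ^ q ^ (ixc n k ℓ α l s c + betaOf k ℓ α l r))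
    else 1

/-- Partitions `λ ⊆ (n-k)^k`, as antitone functions `Fin k → {0,…,n-k}`. -/
def boxPartitions : Finset (Fin k → Fin (n - k + 1)) :=
  Finset.univ.filter (fun f => ∀ i j : Fin k, i ≤ j → f j ≤ f i)

open Finset

section OneBlock

variable {R : Type*} [CommRing R]

theorem qbr_mul_sub (Q : ℕ) (a b : R) : qbr Q a b * (a - b) = a ^ Q - b ^ Q :=
  geom_sum₂_mul a b Q

theorem prod_qbr_mul_sub (q b j μ : ℕ) (x : R) :
    (∏ i ∈ range μ, qbr q (x ^ q ^ (i + j)) (x ^ q ^ (i + b))) * (x ^ q ^ b - x ^ q ^ j) =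
      x ^ q ^ (μ + b) - x ^ q ^ (μ + j) := by
  induction μ with
  | zero => simp
  | succ μ ih =>
    have h := qbr_mul_sub q (x ^ q ^ (μ + j)) (x ^ q ^ (μ + b))
    simp only [← pow_mul, ← pow_succ] at h
    rw [prod_range_succ, mul_right_comm, ih, add_right_comm μ 1 b, add_right_comm μ 1 j]
    linear_combination -h

def monoSeqs (b lo e : ℕ) : Finset (Fin b → ℕ) :=
  (Fintype.piFinset fun _ => Icc lo e).filter Monotone

theorem mem_monoSeqs {b lo e : ℕ} {μ : Fin b → ℕ} :
    μ ∈ monoSeqs b lo e ↔ (∀ j, μ j ∈ Icc lo e) ∧ Monotone μ := by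
  simp [monoSeqs]

theorem sum_monoSeqs_succ {M : Type*} [AddCommMonoid M] (b lo e : ℕ)
    (F : (Fin (b + 1) → ℕ) → M) :
    ∑ μ ∈ monoSeqs (b + 1) lo e, F μ =
      ∑ m ∈ Icc lo e, ∑ ν ∈ monoSeqs b m e, F (Fin.cons m ν) := by
  rw [← sum_sigma (Icc lo e) (fun m => monoSeqs b m e) (fun p => F (Fin.cons p.1 p.2))]
  refine sum_nbij' (fun μ => ⟨μ 0, Fin.tail μ⟩) (fun p => Fin.cons p.1 p.2) ?_ ?_
    (fun μ _ => Fin.cons_self_tail μ) (fun p _ => by simp) (fun μ _ => by simp)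
  · intro μ hμ
    simp only [mem_monoSeqs, mem_sigma, mem_Icc] at hμ ⊢
    exact ⟨hμ.1 0, fun j => ⟨hμ.2 (Fin.zero_le _), (hμ.1 _).2⟩,
      hμ.2.comp Fin.strictMono_succ.monotone⟩
  · rintro ⟨m, ν⟩ hp
    simp only [mem_monoSeqs, mem_sigma, mem_Icc] at hp ⊢
    refine ⟨Fin.cases hp.1 fun j => ⟨hp.1.1.trans (hp.2.1 j).1, (hp.2.1 j).2⟩, ?_⟩
    intro a c hac
    cases a using Fin.cases <;> cases c using Fin.cases
    · exact le_rfl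
    · exact (hp.2.1 _).1
    · exact absurd hac (Fin.succ_pos _).not_ge
    · exact hp.2.2 (Fin.succ_le_succ_iff.mp hac)

theorem sum_monoSeqs_prod_sub (x : ℕ → R) (b : ℕ) {lo e : ℕ} (hle : lo ≤ e) :
    ∑ μ ∈ monoSeqs b lo e, ∏ j : Fin b, (x (μ j + b) - x (μ j + j)) =
      ∏ i ∈ range b, (x (e + b) - x (lo + i)) := by
  induction b generalizing x lo with
  | zero => simp [monoSeqs, Subsingleton.monotone]
  | succ b ih =>
    set T : ℕ → R := fun m => ∏ i ∈ range (b + 1), (x (e + (b + 1)) - x (m + i))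
    have hT : ∀ m, T m - T (m + 1) =
        (x (m + b + 1) - x m) * ∏ i ∈ range b, (x (e + b + 1) - x (m + i + 1)) := by
      intro m
      simp only [T]
      rw [prod_range_succ' _ b, prod_range_succ _ b]
      ring_nf
    -- splitting off `μ 0 = m` leaves a sum of the same shape for `x (· + 1)`
    have hfirst : ∀ m ∈ Icc lo e, ∑ ν ∈ monoSeqs b m e,
        ∏ j : Fin (b + 1), (x ((Fin.cons m ν : Fin (b + 1) → ℕ) j + (b + 1)) -
          x ((Fin.cons m ν : Fin (b + 1) → ℕ) j + j)) = T m - T (m + 1) := by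
      intro m hm
      simp only [Fin.prod_univ_succ, Fin.cons_zero, Fin.cons_succ, Fin.val_zero, Fin.val_succ,
        ← mul_sum, ← add_assoc, add_zero, hT]
      rw [ih (fun a => x (a + 1)) (mem_Icc.mp hm).2]
    have hTe : T (e + 1) = 0 :=
      prod_eq_zero (self_mem_range_succ b) (by rw [add_right_comm, add_assoc, sub_self])
    rw [sum_monoSeqs_succ, sum_congr rfl hfirst]
    calc ∑ m ∈ Icc lo e, (T m - T (m + 1)) = -∑ m ∈ Icc lo e, (T (m + 1) - T m) := by
          simp only [← sum_neg_distrib, neg_sub]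
      _ = T lo := by rw [sum_Icc_sub hle, hTe]; ring

/-- The weight of the diagonal block `λ^{r,r}`, a partition `μ` with `b` rows whose lengths
`μ j` are read from the bottom row up. -/
def diagWeight (q b : ℕ) (μ : Fin b → ℕ) (x : R) : R :=
  ∏ j : Fin b, ∏ m ∈ range (μ j), qbr q (x ^ q ^ (m + j)) (x ^ q ^ (m + b))

theorem sum_diagWeight_mul (q b e : ℕ) (x : R) :
    (∑ μ ∈ monoSeqs b 0 e, diagWeight q b μ x) * ∏ j ∈ range b, (x ^ q ^ b - x ^ q ^ j) =
      ∏ i ∈ range b, (x ^ q ^ (e + b) - x ^ q ^ i) := by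
  have hrow : ∀ μ : Fin b → ℕ, diagWeight q b μ x * ∏ j ∈ range b, (x ^ q ^ b - x ^ q ^ j) =
      ∏ j : Fin b, (x ^ q ^ (μ j + b) - x ^ q ^ (μ j + j)) := by
    intro μ
    rw [diagWeight, ← Fin.prod_univ_eq_prod_range (fun j => x ^ q ^ b - x ^ q ^ j),
      ← prod_mul_distrib]
    exact prod_congr rfl fun j _ => prod_qbr_mul_sub q b j (μ j) x
  simp only [sum_mul, hrow, sum_monoSeqs_prod_sub (fun a => x ^ q ^ a) b (Nat.zero_le e),
    zero_add]

end OneBlock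

section Blocks

variable {k ℓ : ℕ}

def headSum (γ : Fin ℓ → ℕ) (r : Fin ℓ) : ℕ := ∑ r' ∈ Iio r, γ r'

theorem tailSum_eq_sum_Ioi (γ : Fin ℓ → ℕ) (r : Fin ℓ) :
    tailSum ℓ γ r = ∑ r' ∈ Ioi r, γ r' := by
  rw [tailSum, filter_lt_eq_Ioi]

theorem headSum_add_add_tailSum (γ : Fin ℓ → ℕ) (r : Fin ℓ) :
    headSum γ r + γ r + tailSum ℓ γ r = ∑ r', γ r' := by
  rw [headSum, tailSum_eq_sum_Ioi, sum_Iio_add_eq_sum_Iic,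
    ← sum_filter_add_sum_filter_not univ (· ≤ r), filter_ge_eq_Iic]
  congr 2
  ext
  simp

theorem headSum_add_le_headSum {γ : Fin ℓ → ℕ} {r s : Fin ℓ} (h : r < s) :
    headSum γ r + γ r ≤ headSum γ s := by
  rw [headSum, headSum, sum_Iio_add_eq_sum_Iic]
  exact sum_le_sum_of_subset fun x hx => mem_Iio.mpr ((mem_Iic.mp hx).trans_lt h)

theorem tailSum_add_le_tailSum {γ : Fin ℓ → ℕ} {r s : Fin ℓ} (h : r < s) :
    tailSum ℓ γ s + γ s ≤ tailSum ℓ γ r := by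
  have := headSum_add_le_headSum (γ := γ) h
  have := headSum_add_add_tailSum γ r
  have := headSum_add_add_tailSum γ s
  omega

theorem tailSum_sub_add_tailSum {α β : Fin ℓ → ℕ} (hβα : ∀ r, β r ≤ α r) (r : Fin ℓ) :
    tailSum ℓ (α - β) r + tailSum ℓ β r = tailSum ℓ α r := by
  rw [tailSum, tailSum, tailSum, ← sum_add_distrib]
  exact sum_congr rfl fun r' _ => Nat.sub_add_cancel (hβα r')

theorem eq_of_headSum_le_lt {γ : Fin ℓ → ℕ} {r s : Fin ℓ} {x : ℕ}
    (hr : headSum γ r ≤ x ∧ x < headSum γ r + γ r)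
    (hs : headSum γ s ≤ x ∧ x < headSum γ s + γ s) : r = s := by
  by_contra hne
  rcases lt_or_gt_of_ne hne with h | h
  · have := headSum_add_le_headSum (γ := γ) h; omega
  · have := headSum_add_le_headSum (γ := γ) h; omega

theorem sum_castLE_eq_headSum (γ : Fin ℓ → ℕ) (r : Fin ℓ) :
    ∑ i : Fin r, γ (Fin.castLE r.2.le i) = headSum γ r := by
  rw [headSum, show Iio r = univ.map (Fin.castLEEmb r.2.le) from ?_, sum_map]
  · rfl
  ext x
  simp only [mem_map, mem_univ, true_and, mem_Iio, Fin.castLEEmb_apply]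
  exact ⟨fun h => ⟨⟨x, h⟩, rfl⟩, fun ⟨i, hi⟩ => hi ▸ Fin.lt_def.mpr i.2⟩

theorem exists_headSum_le_lt (γ : Fin ℓ → ℕ) {x : ℕ} (hx : x < ∑ r, γ r) :
    ∃ r, headSum γ r ≤ x ∧ x < headSum γ r + γ r := by
  set y := finSigmaFinEquiv.symm (⟨x, hx⟩ : Fin (∑ r, γ r))
  have hy := finSigmaFinEquiv_apply y
  rw [Equiv.apply_symm_apply, sum_castLE_eq_headSum, Fin.val_mk] at hy
  exact ⟨y.1, by omega, by omega⟩

/-- Row `⟨r, j⟩` is the `j`-th row, counted from the top, of row block `r`. -/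
def rowEquiv {β : Fin ℓ → ℕ} (hβ : ∑ r, β r = k) : (Σ r, Fin (β r)) ≃ Fin k :=
  finSigmaFinEquiv.trans (finCongr hβ)

theorem val_rowEquiv {β : Fin ℓ → ℕ} (hβ : ∑ r, β r = k) (x : Σ r, Fin (β r)) :
    (rowEquiv hβ x : ℕ) = headSum β x.1 + x.2 := by
  simp [rowEquiv, sum_castLE_eq_headSum]

theorem card_filter_rowEquiv_symm_fst {β : Fin ℓ → ℕ} (hβ : ∑ r, β r = k) (r : Fin ℓ) :
    #{i | ((rowEquiv hβ).symm i).1 = r} = β r := by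
  rw [card_equiv (rowEquiv hβ).symm (t := {x | x.1 = r}) (by simp), card_filter,
    Fintype.sum_sigma]
  simp [apply_ite]

theorem card_filter_lt_val_and_val_lt {a b : ℕ} (hb : b ≤ k) :
    #{i : Fin k | a < (i : ℕ) ∧ (i : ℕ) < b} = b - (a + 1) := by
  rw [← card_map Fin.valEmbedding, show map Fin.valEmbedding _ = Ioo a b from ?_, Nat.card_Ioo]
  · omega
  ext m
  simp only [mem_map, mem_filter, mem_univ, true_and, Fin.valEmbedding_apply, mem_Ioo]
  exact ⟨fun ⟨i, hi, he⟩ => he ▸ hi, fun hm => ⟨⟨m, by omega⟩, hm, rfl⟩⟩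

theorem mem_iff_lt_card_of_downward {S : Finset (Fin k)} (hS : ∀ i ∈ S, ∀ j ≤ i, j ∈ S)
    (i : Fin k) : i ∈ S ↔ (i : ℕ) < #S := by
  constructor
  · intro hi
    have := card_le_card fun j hj => hS i hi j (mem_Iic.mp hj)
    rw [Fin.card_Iic] at this
    omega
  · intro h
    by_contra hi
    have := card_le_card fun j hj => mem_Iio.mpr (lt_of_not_ge fun hij => hi (hS j hj i hij))
    rw [Fin.card_Iio] at this
    omega

theorem eq_iff_headSum_le_lt_of_monotone {g : Fin k → Fin ℓ} (hg : Monotone g) (i : Fin k)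
    (r : Fin ℓ) :
    g i = r ↔ headSum (fun r => #{i | g i = r}) r ≤ i ∧
      i < headSum (fun r => #{i | g i = r}) r + #{i | g i = r} := by
  have hcard : ∀ t : Finset (Fin ℓ), #{i | g i ∈ t} = ∑ b ∈ t, #{i | g i = b} := fun t => by
    rw [card_eq_sum_card_fiberwise (s := {i | g i ∈ t}) fun i hi => (mem_filter.mp hi).2]
    refine sum_congr rfl fun b hb => congr_arg card ?_
    ext i
    simp only [mem_filter, mem_univ, true_and, and_iff_right_iff_imp]
    exact fun h => h ▸ hb
  have hmem : ∀ t : Finset (Fin ℓ), (∀ b ∈ t, ∀ b' ≤ b, b' ∈ t) →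
      ∀ i, g i ∈ t ↔ (i : ℕ) < ∑ b ∈ t, #{i | g i = b} := fun t ht i => by
    rw [← hcard, ← mem_iff_lt_card_of_downward, mem_filter, and_iff_right (mem_univ i)]
    intro i hi j hji
    simp only [mem_filter, mem_univ, true_and] at hi ⊢
    exact ht _ hi _ (hg hji)
  have hlt := hmem (Iio r) (fun b hb b' hb' => mem_Iio.mpr (hb'.trans_lt (mem_Iio.mp hb))) i
  have hle := hmem (Iic r) (fun b hb b' hb' => mem_Iic.mpr (hb'.trans (mem_Iic.mp hb))) i
  rw [mem_Iio] at hlt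
  rw [mem_Iic, ← sum_Iio_add_eq_sum_Iic] at hle
  rw [eq_iff_le_not_lt, hle, hlt, headSum, not_lt, and_comm]

end Blocks

section Diagram

variable {n k ℓ : ℕ} {α : Fin ℓ → ℕ} {l : Fin k → ℕ}

theorem colInBlock_lt_of_lt {c c' : ℕ} {r s : Fin ℓ} (hc : colInBlock ℓ α c r)
    (hc' : colInBlock ℓ α c' s) (h : r < s) : c' < c := by
  have := tailSum_add_le_tailSum (γ := α) h
  unfold colInBlock at hc hc'
  omega

theorem colInBlock_unique {c : ℕ} {r s : Fin ℓ} (hr : colInBlock ℓ α c r)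
    (hs : colInBlock ℓ α c s) : r = s := by
  by_contra hne
  rcases lt_or_gt_of_ne hne with h | h
  · exact (colInBlock_lt_of_lt hr hs h).false
  · exact (colInBlock_lt_of_lt hs hr h).false

theorem exists_colInBlock (hn : ∑ r, α r = n) {c : ℕ} (h1 : 1 ≤ c) (h2 : c ≤ n) :
    ∃ r, colInBlock ℓ α c r := by
  obtain ⟨r, hr⟩ := exists_headSum_le_lt α (x := n - c) (by omega)
  have := headSum_add_add_tailSum α r
  exact ⟨r, by unfold colInBlock; omega⟩

theorem filter_colInBlock_lt (hn : ∑ r, α r = n) (s : Fin ℓ) (P : ℕ) :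
    {c ∈ Icc 1 n | colInBlock ℓ α c s ∧ c < P} =
      Ioo (tailSum ℓ α s) (min P (tailSum ℓ α s + α s + 1)) := by
  have := headSum_add_add_tailSum α s
  ext c
  simp only [mem_filter, mem_Icc, mem_Ioo, lt_min_iff]
  unfold colInBlock
  omega

theorem pivotCol_strictAnti (hl : Antitone l) : StrictAnti (pivotCol k l) := fun i j h => by
  have := hl h.le
  have := j.isLt
  have : (i : ℕ) < j := h
  unfold pivotCol
  omega

theorem pivotCol_mem_Icc (hk : k ≤ n) (hle : ∀ i, l i ≤ n - k) (i : Fin k) :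
    pivotCol k l i ∈ Icc 1 n := by
  have := hle i
  have := i.isLt
  rw [mem_Icc, pivotCol]
  omega

theorem card_filter_not_isPivotCol (hl : Antitone l) (C : Finset ℕ) :
    #{c ∈ C | ¬isPivotCol k l c} + #{i | pivotCol k l i ∈ C} = #C := by
  rw [← card_image_of_injective _ (pivotCol_strictAnti hl).injective, add_comm,
    ← card_filter_add_card_filter_not (s := C) (isPivotCol k l)]
  congr 1
  refine congr_arg card (ext fun c => ?_)
  simp only [mem_image, mem_filter, mem_univ, true_and, isPivotCol]
  exact ⟨fun ⟨i, hi, he⟩ => ⟨he ▸ hi, i, he⟩, fun ⟨hc, i, he⟩ => ⟨i, he ▸ hc, he⟩⟩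

/-- `ixc n k ℓ α l s P` is the number of stars in column block `s` to the left of column `P`
(for `P` a pivot, the length of that row of `λ^{r,s}`); stars and pivots fill those columns. -/
theorem ixc_add_card_filter_pivotCol (hk : k ≤ n) (hl : Antitone l) (hle : ∀ i, l i ≤ n - k)
    (s : Fin ℓ) (P : ℕ) :
    ixc n k ℓ α l s P + #{i | colInBlock ℓ α (pivotCol k l i) s ∧ pivotCol k l i < P} =
      #{c ∈ Icc 1 n | colInBlock ℓ α c s ∧ c < P} := by
  rw [← card_filter_not_isPivotCol hl, ixc, filter_filter]
  congr 2
  · ext c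
    simp only [mem_filter, and_assoc]
  · ext i
    simp only [mem_filter, mem_univ, true_and, pivotCol_mem_Icc hk hle i]

theorem ixc_mono (s : Fin ℓ) : Monotone (ixc n k ℓ α l s) := fun _ _ h =>
  card_le_card <| monotone_filter_right _ fun _ _ hc => ⟨hc.1, hc.2.1.trans_le h, hc.2.2⟩

theorem ixc_eq_zero_of_lt {P : ℕ} {r s : Fin ℓ} (hP : colInBlock ℓ α P r) (h : s < r) :
    ixc n k ℓ α l s P = 0 :=
  card_eq_zero.mpr <| filter_eq_empty_iff.mpr fun _ _ hc =>
    (colInBlock_lt_of_lt hc.1 hP h).not_gt hc.2.1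

theorem prod_card_filter_lt {M : Type*} [CommMonoid M] (S : Finset ℕ) (G : ℕ → M) :
    ∏ c ∈ S, G #{x ∈ S | x < c} = ∏ m ∈ range #S, G m := by
  induction S using Finset.induction_on_max with
  | empty => simp
  | insert a S hlt ih =>
    have ha : a ∉ S := fun h => (hlt a h).false
    rw [prod_insert ha, card_insert_of_notMem ha, prod_range_succ, mul_comm]
    congr 1
    · rw [← ih]
      refine prod_congr rfl fun c hc => congr_arg G (congr_arg card ?_)
      rw [filter_insert, if_neg (hlt c hc).not_gt]
    · rw [filter_insert, if_neg (lt_irrefl a), filter_true_of_mem hlt]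

theorem wt_eq_prod_ixc {R : Type*} [CommRing R] (q : ℕ) (l : Fin k → ℕ) (t : Fin ℓ → R) :
    wt q n k ℓ α l t = ∏ r, ∏ s, ∏ i with colInBlock ℓ α (pivotCol k l i) r,
      ∏ m ∈ range (ixc n k ℓ α l s (pivotCol k l i)),
        qbr q (t r ^ q ^ (m + (betaPartial k ℓ α l r - ((i : ℕ) + 1))))
          (t s ^ q ^ (m + betaOf k ℓ α l r)) := by
  refine prod_congr rfl fun r _ => prod_congr rfl fun s _ => ?_
  rw [prod_filter]
  refine prod_congr rfl fun i _ => ?_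
  split_ifs with hr
  · simp only [hr, true_and]
    rw [← prod_filter, ixc, ← prod_card_filter_lt]
    refine prod_congr rfl fun c hc => ?_
    have hcP := (mem_filter.mp hc).2.2.1
    have hixc : ixc n k ℓ α l s c = #{x ∈ {c ∈ Icc 1 n | colInBlock ℓ α c s ∧
        c < pivotCol k l i ∧ ¬isPivotCol k l c} | x < c} := by
      rw [ixc, filter_filter]
      refine congr_arg card (filter_congr fun x _ => ?_)
      constructor
      · rintro ⟨h1, h2, h3⟩; exact ⟨⟨h1, h2.trans hcP, h3⟩, h2⟩
      · rintro ⟨⟨h1, -, h3⟩, h2⟩; exact ⟨h1, h2, h3⟩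
    rw [hixc]
  · exact prod_eq_one fun c _ => if_neg fun h => hr h.1

end Diagram

section OfType

variable {n k ℓ : ℕ} {α β : Fin ℓ → ℕ} {l : Fin k → ℕ}

theorem le_of_sum_eq_sum (hn : ∑ r, α r = n) (hβ : ∑ r, β r = k) (hβα : ∀ r, β r ≤ α r) :
    k ≤ n :=
  hn ▸ hβ ▸ sum_le_sum fun r _ => hβα r

structure IsBoxPartitionOfType (n k ℓ : ℕ) (α β : Fin ℓ → ℕ) (l : Fin k → ℕ) : Prop where
  antitone : Antitone l
  le_sub : ∀ i, l i ≤ n - k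
  betaOf_eq : ∀ r, betaOf k ℓ α l r = β r

/-- The contribution of the blocks `λ^{r,s}`, `r < s`, to `wt(λ;α,k)`: the same for every `λ`
with `β(λ) = β`. -/
def offDiagWeight {R : Type*} [CommRing R] (q : ℕ) (α β : Fin ℓ → ℕ) (t : Fin ℓ → R) : R :=
  ∏ r, ∏ s, if r < s then
    ∏ j ∈ range (β r), ∏ i ∈ range (α s - β s), qbr q (t r ^ q ^ (i + j)) (t s ^ q ^ (i + β r))
  else 1

/-- The diagonal block `λ^{r,r}`, with row lengths read from the bottom row up. -/
def localPartition (α : Fin ℓ → ℕ) (hβ : ∑ r, β r = k) (l : Fin k → ℕ) (r : Fin ℓ)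
    (j : Fin (β r)) : ℕ :=
  l (rowEquiv hβ ⟨r, j.rev⟩) - tailSum ℓ (α - β) r

namespace IsBoxPartitionOfType

variable (hn : ∑ r, α r = n) (hβ : ∑ r, β r = k) (hβα : ∀ r, β r ≤ α r)
  (hl : IsBoxPartitionOfType n k ℓ α β l)
include hn hβ hβα hl

/-- The pivot columns are strictly decreasing, so the block containing the pivot of row `i` is
monotone in `i`, with fibres of sizes `β`. -/
theorem colInBlock_iff (i : Fin k) (r : Fin ℓ) :
    colInBlock ℓ α (pivotCol k l i) r ↔ headSum β r ≤ i ∧ (i : ℕ) < headSum β r + β r := by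
  have hk := le_of_sum_eq_sum hn hβ hβα
  choose g hg using fun i =>
    exists_colInBlock hn (mem_Icc.mp (pivotCol_mem_Icc hk hl.le_sub i)).1
      (mem_Icc.mp (pivotCol_mem_Icc hk hl.le_sub i)).2
  have hiff : ∀ i r, colInBlock ℓ α (pivotCol k l i) r ↔ g i = r :=
    fun i r => ⟨fun h => colInBlock_unique (hg i) h, fun h => h ▸ hg i⟩
  have hmono : Monotone g := fun i j hij => not_lt.mp fun h =>
    ((pivotCol_strictAnti hl.antitone).antitone hij).not_gt (colInBlock_lt_of_lt (hg j) (hg i) h)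
  have hfib : (fun r => #{i | g i = r}) = β := funext fun r => by
    rw [← hl.betaOf_eq r, betaOf]
    exact congr_arg card (filter_congr fun i _ => (hiff i r).symm)
  rw [hiff, eq_iff_headSum_le_lt_of_monotone hmono, hfib,
    show #{i | g i = r} = β r from congr_fun hfib r]

theorem colInBlock_rowEquiv_iff (x : Σ r, Fin (β r)) (s : Fin ℓ) :
    colInBlock ℓ α (pivotCol k l (rowEquiv hβ x)) s ↔ s = x.1 := by
  have hx : headSum β x.1 ≤ rowEquiv hβ x ∧ (rowEquiv hβ x : ℕ) < headSum β x.1 + β x.1 := by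
    rw [val_rowEquiv]; omega
  rw [hl.colInBlock_iff hn hβ hβα]
  exact ⟨fun h => eq_of_headSum_le_lt h hx, fun h => h ▸ hx⟩

theorem ixc_of_tailSum_add_lt {s : Fin ℓ} {P : ℕ} (hP : tailSum ℓ α s + α s < P) :
    ixc n k ℓ α l s P = α s - β s := by
  have hcount := ixc_add_card_filter_pivotCol (α := α) (le_of_sum_eq_sum hn hβ hβα)
    hl.antitone hl.le_sub s P
  have hpiv : #{i | colInBlock ℓ α (pivotCol k l i) s ∧ pivotCol k l i < P} = β s := by
    rw [← hl.betaOf_eq s, betaOf]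
    exact congr_arg card (filter_congr fun i _ => and_iff_left_of_imp fun hi => hi.2.trans_lt hP)
  have := hβα s
  rw [filter_colInBlock_lt hn, min_eq_right hP, Nat.card_Ioo, hpiv] at hcount
  omega

/-- Row `i` of the diagram has `λ_i` stars: `ixc` of them in its own block `r`, and all
`α_s - β_s` non-pivot columns of every block `s > r`. -/
theorem ixc_pivotCol_rowEquiv_add_tailSum (r : Fin ℓ) (j : Fin (β r)) :
    ixc n k ℓ α l r (pivotCol k l (rowEquiv hβ ⟨r, j⟩)) + tailSum ℓ (α - β) r =
      l (rowEquiv hβ ⟨r, j⟩) := by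
  set i := rowEquiv hβ ⟨r, j⟩
  have hi : (i : ℕ) = headSum β r + j := val_rowEquiv hβ _
  have hP : colInBlock ℓ α (pivotCol k l i) r :=
    (hl.colInBlock_rowEquiv_iff hn hβ hβα _ r).mpr rfl
  have hcount := ixc_add_card_filter_pivotCol (α := α) (le_of_sum_eq_sum hn hβ hβα)
    hl.antitone hl.le_sub r (pivotCol k l i)
  have hk := headSum_add_add_tailSum β r
  rw [hβ] at hk
  have hpiv : #{i' | colInBlock ℓ α (pivotCol k l i') r ∧ pivotCol k l i' < pivotCol k l i} =
      headSum β r + β r - (i + 1) := by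
    rw [← card_filter_lt_val_and_val_lt (k := k) (a := i) (b := headSum β r + β r) (by omega)]
    refine congr_arg card (filter_congr fun i' _ => ?_)
    rw [hl.colInBlock_iff hn hβ hβα, (pivotCol_strictAnti hl.antitone).lt_iff_gt, Fin.lt_def]
    omega
  have := tailSum_sub_add_tailSum hβα r
  have := i.isLt
  unfold colInBlock at hP
  rw [filter_colInBlock_lt hn, min_eq_left (by omega), Nat.card_Ioo, hpiv] at hcount
  have hp : pivotCol k l i = l i + k - i := rfl
  omega

omit hn hβ hβα in
theorem betaPartial_eq (r : Fin ℓ) : betaPartial k ℓ α l r = headSum β r + β r := by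
  rw [betaPartial, filter_ge_eq_Iic, headSum, sum_Iio_add_eq_sum_Iic]
  exact sum_congr rfl fun r' _ => hl.betaOf_eq r'

theorem prod_filter_colInBlock {M : Type*} [CommMonoid M] (r : Fin ℓ) (F : Fin k → M) :
    ∏ i with colInBlock ℓ α (pivotCol k l i) r, F i =
      ∏ j : Fin (β r), F (rowEquiv hβ ⟨r, j.rev⟩) := by
  rw [prod_filter, ← Fintype.prod_equiv (rowEquiv hβ)
    (fun x => if x.1 = r then F (rowEquiv hβ x) else 1) _
    fun x => by simp only [hl.colInBlock_rowEquiv_iff hn hβ hβα, eq_comm],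
    Fintype.prod_sigma, Fintype.prod_eq_single r fun r' hr' => prod_eq_one fun j _ => if_neg hr']
  exact Fintype.prod_equiv Fin.revPerm _ _ fun j => by simp

theorem prod_blockPair {R : Type*} [CommRing R] (q : ℕ) (t : Fin ℓ → R) (r s : Fin ℓ) :
    ∏ i with colInBlock ℓ α (pivotCol k l i) r, ∏ m ∈ range (ixc n k ℓ α l s (pivotCol k l i)),
        qbr q (t r ^ q ^ (m + (betaPartial k ℓ α l r - ((i : ℕ) + 1))))
          (t s ^ q ^ (m + betaOf k ℓ α l r)) =
      (if r < s then ∏ j ∈ range (β r), ∏ i ∈ range (α s - β s),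
          qbr q (t r ^ q ^ (i + j)) (t s ^ q ^ (i + β r)) else 1) *
        (if s = r then diagWeight q (β r) (localPartition α hβ l r) (t r) else 1) := by
  have hexp : ∀ j : Fin (β r),
      betaPartial k ℓ α l r - ((rowEquiv hβ ⟨r, j.rev⟩ : ℕ) + 1) = j := fun j => by
    have := Fin.val_rev j
    rw [hl.betaPartial_eq, val_rowEquiv]
    dsimp only
    omega
  have hP : ∀ j : Fin (β r), colInBlock ℓ α (pivotCol k l (rowEquiv hβ ⟨r, j.rev⟩)) r :=
    fun j => (hl.colInBlock_rowEquiv_iff hn hβ hβα _ r).mpr rfl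
  rw [hl.prod_filter_colInBlock hn hβ hβα r, hl.betaOf_eq r]
  simp only [hexp]
  rcases lt_trichotomy r s with h | rfl | h
  · rw [if_pos h, if_neg h.ne', mul_one, ← Fin.prod_univ_eq_prod_range
      (fun j => ∏ i ∈ range (α s - β s), qbr q (t r ^ q ^ (i + j)) (t s ^ q ^ (i + β r)))]
    refine prod_congr rfl fun j _ => ?_
    have := tailSum_add_le_tailSum (γ := α) h
    rw [hl.ixc_of_tailSum_add_lt hn hβ hβα ((hP j).1.trans_le' this)]
  · rw [if_neg (lt_irrefl r), if_pos rfl, one_mul, diagWeight]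
    refine prod_congr rfl fun j _ => ?_
    have := hl.ixc_pivotCol_rowEquiv_add_tailSum hn hβ hβα r j.rev
    rw [localPartition, show ixc n k ℓ α l r (pivotCol k l (rowEquiv hβ ⟨r, j.rev⟩)) =
      l (rowEquiv hβ ⟨r, j.rev⟩) - tailSum ℓ (α - β) r by omega]
  · rw [if_neg h.not_gt, if_neg h.ne, one_mul]
    exact prod_eq_one fun j _ => by rw [ixc_eq_zero_of_lt (hP j) h, prod_range_zero]

theorem wt_eq {R : Type*} [CommRing R] (q : ℕ) (t : Fin ℓ → R) :
    wt q n k ℓ α l t =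
      offDiagWeight q α β t * ∏ r, diagWeight q (β r) (localPartition α hβ l r) (t r) := by
  simp only [wt_eq_prod_ixc, hl.prod_blockPair hn hβ hβα q t, prod_mul_distrib, prod_ite_eq',
    mem_univ, if_true]
  rfl

theorem localPartition_mem (r : Fin ℓ) :
    localPartition α hβ l r ∈ monoSeqs (β r) 0 (α r - β r) := by
  refine mem_monoSeqs.mpr ⟨fun j => mem_Icc.mpr ⟨Nat.zero_le _, ?_⟩, fun j j' h => ?_⟩
  · have hstars := hl.ixc_pivotCol_rowEquiv_add_tailSum hn hβ hβα r j.rev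
    have hle := ixc_mono (n := n) (α := α) (l := l) r
      (((hl.colInBlock_rowEquiv_iff hn hβ hβα ⟨r, j.rev⟩ r).mpr rfl).2.trans (Nat.le_succ _))
    rw [hl.ixc_of_tailSum_add_lt hn hβ hβα (Nat.lt_succ_self _)] at hle
    rw [localPartition]
    omega
  · refine Nat.sub_le_sub_right (hl.antitone ?_) _
    rw [Fin.le_def, val_rowEquiv, val_rowEquiv]
    simpa [Fin.le_def] using Fin.rev_le_rev.mpr h

end IsBoxPartitionOfType

end OfType

section Bijection

variable {n k ℓ : ℕ} {α β : Fin ℓ → ℕ} {l : Fin k → ℕ}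

def ofLocalPartitions (α : Fin ℓ → ℕ) (hβ : ∑ r, β r = k) (μ : ∀ r, Fin (β r) → ℕ)
    (i : Fin k) : ℕ :=
  μ ((rowEquiv hβ).symm i).1 ((rowEquiv hβ).symm i).2.rev +
    tailSum ℓ (α - β) ((rowEquiv hβ).symm i).1

theorem ofLocalPartitions_rowEquiv (hβ : ∑ r, β r = k) (μ : ∀ r, Fin (β r) → ℕ)
    (x : Σ r, Fin (β r)) :
    ofLocalPartitions α hβ μ (rowEquiv hβ x) = μ x.1 x.2.rev + tailSum ℓ (α - β) x.1 := by
  rw [ofLocalPartitions, Equiv.symm_apply_apply]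

theorem localPartition_ofLocalPartitions (hβ : ∑ r, β r = k) (μ : ∀ r, Fin (β r) → ℕ) :
    localPartition α hβ (ofLocalPartitions α hβ μ) = μ := by
  ext r j
  simp [localPartition, ofLocalPartitions_rowEquiv]

theorem IsBoxPartitionOfType.ofLocalPartitions_localPartition (hn : ∑ r, α r = n)
    (hβ : ∑ r, β r = k) (hβα : ∀ r, β r ≤ α r) (hl : IsBoxPartitionOfType n k ℓ α β l) :
    ofLocalPartitions α hβ (localPartition α hβ l) = l := by
  ext i
  obtain ⟨⟨r, j⟩, rfl⟩ := (rowEquiv hβ).surjective i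
  have := hl.ixc_pivotCol_rowEquiv_add_tailSum hn hβ hβα r j
  rw [ofLocalPartitions_rowEquiv, localPartition, Fin.rev_rev]
  dsimp only
  omega

section LocalData

variable {μ : ∀ r, Fin (β r) → ℕ} (hμ : ∀ r, μ r ∈ monoSeqs (β r) 0 (α r - β r))
include hμ

theorem le_of_mem_monoSeqs (r : Fin ℓ) (j : Fin (β r)) : μ r j ≤ α r - β r :=
  (mem_Icc.mp ((mem_monoSeqs.mp (hμ r)).1 j)).2

theorem antitone_ofLocalPartitions (hβ : ∑ r, β r = k) :
    Antitone (ofLocalPartitions α hβ μ) := by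
  intro i i' h
  obtain ⟨⟨r, j⟩, rfl⟩ := (rowEquiv hβ).surjective i
  obtain ⟨⟨r', j'⟩, rfl⟩ := (rowEquiv hβ).surjective i'
  rw [Fin.le_def, val_rowEquiv, val_rowEquiv] at h
  rw [ofLocalPartitions_rowEquiv, ofLocalPartitions_rowEquiv]
  dsimp only at h ⊢
  rcases lt_trichotomy r r' with hr | rfl | hr
  · have h1 := tailSum_add_le_tailSum (γ := α - β) hr
    rw [Pi.sub_apply] at h1
    have := le_of_mem_monoSeqs hμ r' j'.rev
    omega
  · have : j ≤ j' := Fin.le_def.mpr (by omega)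
    exact Nat.add_le_add_right ((mem_monoSeqs.mp (hμ r)).2 (Fin.rev_le_rev.mpr this)) _
  · have := headSum_add_le_headSum (γ := β) hr
    have := j'.isLt
    omega

theorem colInBlock_pivotCol_ofLocalPartitions (hβ : ∑ r, β r = k) (hβα : ∀ r, β r ≤ α r)
    (x : Σ r, Fin (β r)) :
    colInBlock ℓ α (pivotCol k (ofLocalPartitions α hβ μ) (rowEquiv hβ x)) x.1 := by
  obtain ⟨r, j⟩ := x
  have := le_of_mem_monoSeqs hμ r j.rev
  have := headSum_add_add_tailSum β r
  have := tailSum_sub_add_tailSum hβα r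
  have := hβα r
  have := j.isLt
  rw [colInBlock, pivotCol, ofLocalPartitions_rowEquiv, val_rowEquiv]
  dsimp only
  omega

theorem isBoxPartitionOfType_ofLocalPartitions (hn : ∑ r, α r = n) (hβ : ∑ r, β r = k)
    (hβα : ∀ r, β r ≤ α r) : IsBoxPartitionOfType n k ℓ α β (ofLocalPartitions α hβ μ) := by
  refine ⟨antitone_ofLocalPartitions hμ hβ, fun i => ?_, fun r => ?_⟩
  · obtain ⟨⟨r, j⟩, rfl⟩ := (rowEquiv hβ).surjective i
    have := le_of_mem_monoSeqs hμ r j.rev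
    have hblocks := headSum_add_add_tailSum (α - β) r
    rw [Pi.sub_apply] at hblocks
    have hsum : ∑ r, (α - β) r + k = n := by
      rw [← hn, ← hβ, ← sum_add_distrib]
      exact sum_congr rfl fun r _ => Nat.sub_add_cancel (hβα r)
    rw [ofLocalPartitions_rowEquiv]
    dsimp only
    omega
  · rw [betaOf, ← card_filter_rowEquiv_symm_fst hβ r]
    refine congr_arg card (filter_congr fun i _ => ?_)
    obtain ⟨x, rfl⟩ := (rowEquiv hβ).surjective i
    have hx := colInBlock_pivotCol_ofLocalPartitions hμ hβ hβα x
    rw [Equiv.symm_apply_apply]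
    exact ⟨fun h => colInBlock_unique hx h, fun h => h ▸ hx⟩

end LocalData

theorem mem_filter_boxPartitions_iff {f : Fin k → Fin (n - k + 1)} :
    f ∈ (boxPartitions n k).filter (fun f => ∀ r, betaOf k ℓ α (fun i => (f i : ℕ)) r = β r) ↔
      IsBoxPartitionOfType n k ℓ α β (fun i => (f i : ℕ)) := by
  simp only [boxPartitions, mem_filter, mem_univ, true_and]
  exact ⟨fun h => ⟨fun i j hij => h.1 i j hij, fun i => Nat.lt_succ_iff.mp (f i).isLt, h.2⟩,
    fun h => ⟨fun i j hij => h.antitone hij, h.betaOf_eq⟩⟩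

theorem sum_filter_boxPartitions_localPartition {M : Type*} [AddCommMonoid M] (hn : ∑ r, α r = n)
    (hβ : ∑ r, β r = k) (hβα : ∀ r, β r ≤ α r) (F : (∀ r, Fin (β r) → ℕ) → M) :
    ∑ f ∈ (boxPartitions n k).filter (fun f => ∀ r, betaOf k ℓ α (fun i => (f i : ℕ)) r = β r),
        F (localPartition α hβ fun i => (f i : ℕ)) =
      ∑ μ ∈ Fintype.piFinset fun r => monoSeqs (β r) 0 (α r - β r), F μ := by
  have hval : ∀ μ ∈ Fintype.piFinset fun r => monoSeqs (β r) 0 (α r - β r),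
      (fun i => (Fin.ofNat (n - k + 1) (ofLocalPartitions α hβ μ i) : ℕ)) =
        ofLocalPartitions α hβ μ := fun μ hμ => funext fun i => by
    rw [Fin.val_ofNat, Nat.mod_eq_of_lt (Nat.lt_succ_of_le
      ((isBoxPartitionOfType_ofLocalPartitions (Fintype.mem_piFinset.mp hμ) hn hβ hβα).le_sub i))]
  refine sum_nbij' (fun f => localPartition α hβ fun i => (f i : ℕ))
    (fun μ i => Fin.ofNat (n - k + 1) (ofLocalPartitions α hβ μ i)) (fun f hf => ?_)
    (fun μ hμ => ?_) (fun f hf => ?_) (fun μ hμ => ?_) (fun _ _ => rfl)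
  · exact Fintype.mem_piFinset.mpr
      ((mem_filter_boxPartitions_iff.mp hf).localPartition_mem hn hβ hβα)
  · rw [mem_filter_boxPartitions_iff, hval μ hμ]
    exact isBoxPartitionOfType_ofLocalPartitions (Fintype.mem_piFinset.mp hμ) hn hβ hβα
  · ext i
    rw [Fin.val_ofNat, (mem_filter_boxPartitions_iff.mp hf).ofLocalPartitions_localPartition
      hn hβ hβα]
    exact Nat.mod_eq_of_lt (f i).isLt
  · rw [hval μ hμ, localPartition_ofLocalPartitions]

theorem sum_wt_mul_prod_sub {R : Type*} [CommRing R] (q : ℕ) (hn : ∑ r, α r = n)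
    (hβ : ∑ r, β r = k) (hβα : ∀ r, β r ≤ α r) (t : Fin ℓ → R) :
    (∑ f ∈ (boxPartitions n k).filter (fun f => ∀ r, betaOf k ℓ α (fun i => (f i : ℕ)) r = β r),
        wt q n k ℓ α (fun i => (f i : ℕ)) t) *
        ∏ r, ∏ i ∈ range (β r), (t r ^ q ^ β r - t r ^ q ^ i) =
      (∏ r, ∏ i ∈ range (β r), (t r ^ q ^ α r - t r ^ q ^ i)) * offDiagWeight q α β t := by
  set D : Fin ℓ → R := fun r => ∏ i ∈ range (β r), (t r ^ q ^ β r - t r ^ q ^ i)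
  have hwt : ∀ f ∈ (boxPartitions n k).filter
      (fun f => ∀ r, betaOf k ℓ α (fun i => (f i : ℕ)) r = β r),
      wt q n k ℓ α (fun i => (f i : ℕ)) t * ∏ r, D r = offDiagWeight q α β t *
        ∏ r, (diagWeight q (β r) (localPartition α hβ (fun i => (f i : ℕ)) r) (t r) * D r) :=
    fun f hf => by
      rw [(mem_filter_boxPartitions_iff.mp hf).wt_eq hn hβ hβα, mul_assoc, ← prod_mul_distrib]
  rw [sum_mul, sum_congr rfl hwt, ← mul_sum, mul_comm, sum_filter_boxPartitions_localPartition hn hβ hβα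
    (fun μ => ∏ r, (diagWeight q (β r) (μ r) (t r) * D r)), ← prod_univ_sum
    (fun r => monoSeqs (β r) 0 (α r - β r)) fun r ν => diagWeight q (β r) ν (t r) * D r]
  simp only [D, ← sum_mul, sum_diagWeight_mul, Nat.sub_add_cancel (hβα _)]

end Bijection

open MvPolynomial in
theorem schubert_union_weight_factorization
    (hn : ∑ r, α r = n)
    (β : Fin ℓ → ℕ) (hβ : ∑ r, β r = k) (hβle : ∀ r, β r ≤ α r) :
    (∑ f ∈ (boxPartitions n k).filter
        (fun f => ∀ r, betaOf k ℓ α (fun i => ((f i : ℕ))) r = β r),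
      wt q n k ℓ α (fun i => ((f i : ℕ))) (fun r => (X r : MvPolynomial (Fin ℓ) ℤ))) *
      (∏ r : Fin ℓ, ∏ i ∈ Finset.range (β r),
        ((X r : MvPolynomial (Fin ℓ) ℤ) ^ q ^ (β r) - (X r) ^ q ^ i)) =
    (∏ r : Fin ℓ, ∏ i ∈ Finset.range (β r),
        ((X r : MvPolynomial (Fin ℓ) ℤ) ^ q ^ (α r) - (X r) ^ q ^ i)) *
      ∏ r : Fin ℓ, ∏ s : Fin ℓ,
        if r < s then
          ∏ j ∈ Finset.range (β r), ∏ i ∈ Finset.range (α s - β s),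
            qbr q ((X r : MvPolynomial (Fin ℓ) ℤ) ^ q ^ (i + j))
              ((X s) ^ q ^ (i + β r))
        else 1 :=
  sum_wt_mul_prod_sub q hn hβ hβle _

end CSP
end
end

section
/- Let w ∈ W^β (i.e., w ∈ S_n is increasing on each block B_k of β), and suppose (i,j) is a 'star position' of w, meaning i < w^{−1}(j) and w(i) > j, with w(i) ∈ A_r and j ∈ A_s where r > s. Then: (i) for every i' with i' in the same block B_k as i and w(i') ∈ A_r, the pair (i',j) is also a star position, i.e., i' < w^{−1}(j) and w(i') > j; and (ii) for every j' ∈ A_s with w^{−1}(j') in the same block B_k as w^{−1}(j), the pair (i,j') is also a star position, i.e., i < w^{−1}(j') and w(i) > j'. -/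
/-!
The inequalities `j < w i'` and `j' < w i` hold because the blocks of `α` are ordered from left
to right, so everything in `A_s` precedes everything in `A_r`. For the other two, note that
`(i, w⁻¹ j)` is an inversion of `w`, while the blocks of `β` are intervals on which `w` is
increasing; hence no block of `β` contains both `i` and `w⁻¹ j`. So `w⁻¹ j` cannot lie weakly
between `i` and `i' ∈ B_k`, and `i` cannot lie weakly between `w⁻¹ j'` and `w⁻¹ j ∈ B_k`.
-/

open scoped Classical

noncomputable section

namespace CSP

variable {n ℓ m : ℕ}

/-- `x` (a `0`-indexed position) lies in the block `A_r` of the composition `α`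
(blocks labeled from left to right). -/
def memBlock (γ : Fin ℓ → ℕ) (x : Fin n) (r : Fin ℓ) : Prop :=
  (∑ r' ∈ Finset.univ.filter (fun r' => r' < r), γ r') ≤ (x : ℕ) ∧
    (x : ℕ) < (∑ r' ∈ Finset.univ.filter (fun r' => r' < r), γ r') + γ r

lemma sum_filter_lt_add_le_sum_filter_lt (γ : Fin ℓ → ℕ) {s r : Fin ℓ} (hsr : s < r) :
    (∑ r' ∈ Finset.univ.filter (fun r' => r' < s), γ r') + γ s ≤
      ∑ r' ∈ Finset.univ.filter (fun r' => r' < r), γ r' := by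
  rw [add_comm, ← Finset.sum_insert (by simp)]
  refine Finset.sum_le_sum_of_subset fun a ha => ?_
  simp only [Finset.mem_insert, Finset.mem_filter, Finset.mem_univ, true_and] at ha ⊢
  rcases ha with rfl | has
  · exact hsr
  · exact has.trans hsr

lemma memBlock.lt_of_lt {γ : Fin ℓ → ℕ} {x y : Fin n} {s r : Fin ℓ} (hx : memBlock γ x s)
    (hsr : s < r) (hy : memBlock γ y r) : x < y :=
  Fin.lt_def.mpr <| hx.2.trans_le <| (sum_filter_lt_add_le_sum_filter_lt γ hsr).trans hy.1

lemma memBlock.of_le_of_le {γ : Fin m → ℕ} {x y z : Fin n} {k : Fin m}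
    (hx : memBlock γ x k) (hy : memBlock γ y k) (hxz : x ≤ z) (hzy : z ≤ y) :
    memBlock γ z k :=
  ⟨hx.1.trans hxz, lt_of_le_of_lt hzy hy.2⟩

section Inversion

variable {X : Type*} [Preorder X] {f : Fin n → X} {γ : Fin m → ℕ} {k : Fin m} {i p : Fin n}

lemma lt_of_inversion_of_memBlock_left (hf : StrictMonoOn f {x | memBlock γ x k})
    {i' : Fin n} (hi : memBlock γ i k) (hi' : memBlock γ i' k) (hip : i < p) (hfp : f p < f i) :
    i' < p := by
  by_contra! hpi'
  exact (hf hi (hi.of_le_of_le hi' hip.le hpi') hip).not_gt hfp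

lemma lt_of_inversion_of_memBlock_right (hf : StrictMonoOn f {x | memBlock γ x k})
    {q : Fin n} (hp : memBlock γ p k) (hq : memBlock γ q k) (hip : i < p) (hfp : f p < f i) :
    i < q := by
  by_contra! hqi
  exact (hf (hq.of_le_of_le hp hqi hip.le) hp hip).not_gt hfp

end Inversion

theorem star_positions_propagate_general
    (α : Fin ℓ → ℕ) (β : Fin m → ℕ)
    (w : Equiv.Perm (Fin n))
    (hw : ∀ (k : Fin m) (x y : Fin n),
      memBlock β x k → memBlock β y k → x < y → w x < w y)
    (i j : Fin n) (r s : Fin ℓ) (hrs : s < r)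
    (hwi : memBlock α (w i) r) (hj : memBlock α j s)
    (hstar : i < w.symm j ∧ j < w i) :
    (∀ (k : Fin m) (i' : Fin n),
      memBlock β i k → memBlock β i' k → memBlock α (w i') r →
        i' < w.symm j ∧ j < w i') ∧
    (∀ (k : Fin m) (j' : Fin n),
      memBlock α j' s → memBlock β (w.symm j) k → memBlock β (w.symm j') k →
        i < w.symm j' ∧ j' < w i) := by
  have hmono (k : Fin m) : StrictMonoOn w {x | memBlock β x k} :=
    fun x hx y hy hxy => hw k x y hx hy hxy
  have hinv : w (w.symm j) < w i := by simpa using hstar.2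
  refine ⟨fun k i' hik hi'k hwi' => ⟨?_, hj.lt_of_lt hrs hwi'⟩,
    fun k j' hj' hjk hj'k => ⟨?_, hj'.lt_of_lt hrs hwi⟩⟩
  · exact lt_of_inversion_of_memBlock_left (hmono k) hik hi'k hstar.1 hinv
  · exact lt_of_inversion_of_memBlock_right (hmono k) hjk hj'k hstar.1 hinv

/-- **Star positions propagate along blocks.** Let `w ∈ W^β` (increasing on every
block of `β`) and let `(i,j)` be a star position (`i < w⁻¹(j)`, `w(i) > j`) with
`w(i) ∈ A_r`, `j ∈ A_s`, `r > s`. Then every `i'` in the same `β`-block as `i` with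
`w(i') ∈ A_r` gives a star position `(i',j)`, and every `j' ∈ A_s` with `w⁻¹(j')` in
the same `β`-block as `w⁻¹(j)` gives a star position `(i,j')`. -/
theorem star_positions_propagate
    (α : Fin ℓ → ℕ) (β : Fin m → ℕ)
    (hαpos : ∀ r, 0 < α r) (hα : ∑ r, α r = n)
    (hβpos : ∀ k, 0 < β k) (hβ : ∑ k, β k = n)
    (w : Equiv.Perm (Fin n))
    (hw : ∀ (k : Fin m) (x y : Fin n),
      memBlock β x k → memBlock β y k → x < y → w x < w y)
    (i j : Fin n) (r s : Fin ℓ) (hrs : s < r)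
    (hwi : memBlock α (w i) r) (hj : memBlock α j s)
    (hstar : i < w.symm j ∧ j < w i) :
    (∀ (k : Fin m) (i' : Fin n),
      memBlock β i k → memBlock β i' k → memBlock α (w i') r →
        i' < w.symm j ∧ j < w i') ∧
    (∀ (k : Fin m) (j' : Fin n),
      memBlock α j' s → memBlock β (w.symm j) k → memBlock β (w.symm j') k →
        i < w.symm j' ∧ j' < w i) :=
  star_positions_propagate_general α β w hw i j r s hrs hwi hj hstar

end CSP
end
end

section
/- For every composition α = (α_1,…,α_ℓ) of n and every composition β = (β_1,…,β_m) of n, the Gaussian multinomial coefficient satisfies the generalized q-Vandermonde identity: [n; β_1,…,β_m]_q = Σ ∏_{r=1}^ℓ [α_r; β^{(r)}]_q · ∏_{1≤s<r≤ℓ} ∏_{1≤i<j≤m} q^{β^{(r)}_i · β^{(s)}_j}, where the sum is over all tuples (β^{(1)},…,β^{(ℓ)}) of weak compositions of α_1,…,α_ℓ into m parts with componentwise sum β^{(1)} + ⋯ + β^{(ℓ)} = β. (This is an identity of polynomials in q.) -/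
/-!
The generalized `q`-Vandermonde identity for Gaussian multinomial coefficients,
as polynomials in `q`.
-/

open scoped Classical

noncomputable section

namespace CSP

open Polynomial

/-- The `q`-factorial `[N]_q! = ∏_{i=1}^N (1 + q + ⋯ + q^{i-1})`,
as a polynomial in `q`. -/
def qFac (N : ℕ) : Polynomial ℤ :=
  ∏ i ∈ Finset.range N, ∑ j ∈ Finset.range (i + 1), (X : Polynomial ℤ) ^ j

/-- The Gaussian multinomial coefficient `[N; γ]_q = [N]_q! / ([γ_1]_q! ⋯ [γ_m]_q!)`,
as a polynomial in `q` (the division, which is exact, is division by a monic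
polynomial). -/
def qMultinom (N : ℕ) {m : ℕ} (γ : Fin m → ℕ) : Polynomial ℤ :=
  qFac N /ₘ ∏ k : Fin m, qFac (γ k)

/-!
Both sides count words by inversions. By MacMahon's theorem, `[N; γ]_q` is the generating
function `∑ q^{inv w}` of the words `w` of length `N` with `γ_k` letters `k`, which follows by
removing the first letter of `w`. Cut a word of length `n` into consecutive blocks of lengths
`α_1, …, α_ℓ`. Its inversions are those inside the blocks, plus, for blocks `s < r`, the pairs
formed by a letter `i` of block `r` and a letter `j > i` of block `s`; there are
`∑_{i<j} β^{(r)}_i β^{(s)}_j` of the latter, a number that depends only on the contents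
`β^{(r)}` of the blocks. Grouping the words by these contents gives the identity.
-/

open Finset

def qNat (d : ℕ) : ℤ[X] := ∑ j ∈ range d, X ^ j

@[simp] lemma qNat_zero : qNat 0 = 0 := rfl

lemma qNat_add (a b : ℕ) : qNat (a + b) = qNat a + X ^ a * qNat b := by
  simp [qNat, sum_range_add, mul_sum, pow_add]

lemma qFac_succ (N : ℕ) : qFac (N + 1) = qFac N * qNat (N + 1) := prod_range_succ _ _

lemma qFac_monic (N : ℕ) : (qFac N).Monic :=
  monic_prod_of_monic _ _ fun i _ => monic_geom_sum_X i.succ_ne_zero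

lemma qFac_eq_qNat_mul_qFac_pred {d : ℕ} (hd : d ≠ 0) : qFac d = qNat d * qFac (d - 1) := by
  obtain ⟨d, rfl⟩ := Nat.exists_eq_succ_of_ne_zero hd
  rw [qFac_succ, mul_comm, Nat.succ_sub_one]

lemma sum_X_pow_mul_qNat {ι : Type*} [LinearOrder ι] (s : Finset ι) (γ : ι → ℕ) :
    ∑ k ∈ s, X ^ (∑ i ∈ s with i < k, γ i) * qNat (γ k) = qNat (∑ k ∈ s, γ k) := by
  induction s using Finset.induction_on_max with
  | empty => simp
  | insert a s has ih =>
    have ha : a ∉ s := fun h => lt_irrefl a (has a h)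
    have hbelow : ∀ k ∈ s, {i ∈ insert a s | i < k} = {i ∈ s | i < k} := fun k hk => by
      rw [filter_insert, if_neg (not_lt.2 (has k hk).le)]
    have hat : {i ∈ insert a s | i < a} = s := by
      rw [filter_insert, if_neg (lt_irrefl a), filter_true_of_mem has]
    rw [sum_insert ha, sum_insert ha, hat,
      sum_congr rfl fun k hk => congrArg (fun t => X ^ (∑ i ∈ t, γ i) * qNat (γ k)) (hbelow k hk),
      ih, add_comm (γ a), qNat_add, add_comm]

section Words

variable {ι κ A : Type*}

def content [Fintype ι] [DecidableEq A] (w : ι → A) (a : A) : ℕ := #{p | w p = a}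

def inversions [Fintype ι] [LinearOrder ι] [LinearOrder A] (w : ι → A) : ℕ :=
  #{pq : ι × ι | pq.1 < pq.2 ∧ w pq.2 < w pq.1}

def inversionPoly (ι : Type*) [Fintype ι] [LinearOrder ι] [Fintype A] [LinearOrder A]
    (γ : A → ℕ) : ℤ[X] :=
  ∑ w : ι → A with content w = γ, X ^ inversions w

section Content

variable [Fintype ι] [DecidableEq A]

lemma sum_content [Fintype A] (w : ι → A) : ∑ a, content w a = Fintype.card ι :=
  (card_eq_sum_card_fiberwise fun p _ => mem_univ (w p)).symm

lemma content_le_card (w : ι → A) (a : A) : content w a ≤ Fintype.card ι :=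
  card_filter_le _ _

lemma content_comp_equiv [Fintype κ] (e : κ ≃ ι) (w : ι → A) : content (w ∘ e) = content w := by
  funext a
  simp only [content, card_filter]
  exact e.sum_comp fun p => if w p = a then 1 else 0

end Content

lemma inversions_comp_orderIso [Fintype ι] [LinearOrder ι] [Fintype κ] [LinearOrder κ]
    [LinearOrder A] (e : κ ≃o ι) (w : ι → A) : inversions (w ∘ e) = inversions w := by
  simp only [inversions, card_filter]
  rw [← (e.toEquiv.prodCongr e.toEquiv).sum_comp]
  simp [e.lt_iff_lt]

lemma inversionPoly_congr [Fintype ι] [LinearOrder ι] [Fintype κ] [LinearOrder κ] [Fintype A]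
    [LinearOrder A] (e : κ ≃o ι) (γ : A → ℕ) : inversionPoly κ γ = inversionPoly ι γ := by
  refine sum_equiv (e.toEquiv.arrowCongr (Equiv.refl A)) (fun w => ?_) fun w _ => ?_
  · simp only [mem_filter, mem_univ, true_and]
    rw [← content_comp_equiv e.symm.toEquiv w]
    rfl
  · rw [← inversions_comp_orderIso e.symm w]
    rfl

lemma sum_comp_eq_sum_content_mul [Fintype ι] [Fintype A] [DecidableEq A] (w : ι → A)
    (f : A → ℕ) : ∑ p, f (w p) = ∑ a, content w a * f a := by
  rw [← sum_fiberwise univ w]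
  refine sum_congr rfl fun a _ => ?_
  rw [sum_congr rfl fun p hp => congrArg f (mem_filter.1 hp).2, sum_const, smul_eq_mul]
  rfl

lemma sum_sum_ite_lt_eq_sum_content_mul {κ₁ κ₂ : Type*} [Fintype κ₁] [Fintype κ₂] [Fintype A]
    [LinearOrder A] (u : κ₁ → A) (v : κ₂ → A) :
    ∑ p, ∑ q, (if v q < u p then 1 else 0) = ∑ a, ∑ b with a < b, content v a * content u b := by
  calc ∑ p, ∑ q, (if v q < u p then 1 else 0)
      = ∑ p, ∑ a, content v a * (if a < u p then 1 else 0) :=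
        sum_congr rfl fun p _ => sum_comp_eq_sum_content_mul v fun a => if a < u p then 1 else 0
    _ = ∑ b, content u b * ∑ a, content v a * (if a < b then 1 else 0) :=
        sum_comp_eq_sum_content_mul u fun b => ∑ a, content v a * if a < b then 1 else 0
    _ = _ := by
        simp only [mul_sum, sum_filter]
        rw [sum_comm]
        refine sum_congr rfl fun a _ => sum_congr rfl fun b _ => ?_
        split_ifs <;> ring

end Words

lemma add_single_one_eq_iff {A : Type*} [DecidableEq A] {f γ : A → ℕ} {a : A} :
    f + Pi.single a 1 = γ ↔ γ a ≠ 0 ∧ f = γ - Pi.single a 1 := by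
  constructor
  · rintro rfl
    refine ⟨by simp, ?_⟩
    funext b
    simp
  · rintro ⟨ha, rfl⟩
    funext b
    by_cases hb : b = a
    · subst hb; simp; omega
    · simp [hb]

section Cons

variable {A : Type*} [LinearOrder A] {N : ℕ}

lemma content_cons (a : A) (w : Fin N → A) :
    content (Fin.cons a w : Fin (N + 1) → A) = content w + Pi.single a 1 := by
  funext b
  simp only [content, card_filter, Fin.sum_univ_succ, Fin.cons_zero, Fin.cons_succ, Pi.add_apply,
    Pi.single_apply, eq_comm (a := b)]
  omega

variable [Fintype A]

lemma inversions_cons (a : A) (w : Fin N → A) :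
    inversions (Fin.cons a w : Fin (N + 1) → A) = ∑ b with b < a, content w b + inversions w := by
  have hfirst : ∑ b with b < a, content w b = ∑ q, if w q < a then 1 else 0 := by
    rw [sum_comp_eq_sum_content_mul w fun b => if b < a then 1 else 0, sum_filter]
    simp
  simp only [inversions, card_filter, Fintype.sum_prod_type, Fin.sum_univ_succ, Fin.cons_zero,
    Fin.cons_succ, lt_irrefl, Fin.succ_pos, Fin.succ_lt_succ_iff, not_lt_zero, hfirst]
  simp

lemma inversionPoly_succ (γ : A → ℕ) :
    inversionPoly (Fin (N + 1)) γ = ∑ a with γ a ≠ 0,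
      X ^ (∑ b with b < a, γ b) * inversionPoly (Fin N) (γ - Pi.single a 1) := by
  unfold inversionPoly
  rw [sum_filter, ← (Fin.consEquiv fun _ => A).sum_comp, Fintype.sum_prod_type, sum_filter]
  refine sum_congr rfl fun a _ => ?_
  simp only [Fin.consEquiv, Equiv.coe_fn_mk, content_cons, add_single_one_eq_iff, inversions_cons]
  by_cases ha : γ a = 0
  · simp [ha]
  have hbelow : ∑ b with b < a, (γ - Pi.single a 1 : A → ℕ) b = ∑ b with b < a, γ b :=
    sum_congr rfl fun b hb => by simp [(mem_filter.1 hb).2.ne]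
  rw [if_pos ha, mul_sum, sum_filter]
  refine sum_congr rfl fun w _ => ?_
  simp only [ha, ne_eq, not_false_eq_true, true_and]
  split_ifs with hw
  · rw [hw, hbelow, pow_add]
  · rfl

lemma prod_qFac_eq_qNat_mul (γ : A → ℕ) {a : A} (ha : γ a ≠ 0) :
    ∏ b, qFac (γ b) = qNat (γ a) * ∏ b, qFac ((γ - Pi.single a 1 : A → ℕ) b) := by
  have herase : ∏ b ∈ univ.erase a, qFac ((γ - Pi.single a 1 : A → ℕ) b) =
      ∏ b ∈ univ.erase a, qFac (γ b) :=
    prod_congr rfl fun b hb => by simp [ne_of_mem_erase hb]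
  rw [← mul_prod_erase univ _ (mem_univ a), ← mul_prod_erase univ _ (mem_univ a), herase,
    qFac_eq_qNat_mul_qFac_pred ha, mul_assoc]
  simp

lemma sum_sub_single_one {γ : A → ℕ} {a : A} (ha : γ a ≠ 0) :
    ∑ b, (γ - Pi.single a 1 : A → ℕ) b + 1 = ∑ b, γ b := by
  conv_rhs => rw [← add_single_one_eq_iff.2 ⟨ha, rfl⟩]
  simp [sum_add_distrib]

theorem inversionPoly_mul_prod_qFac (γ : A → ℕ) (h : ∑ a, γ a = N) :
    inversionPoly (Fin N) γ * ∏ a, qFac (γ a) = qFac N := by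
  induction N generalizing γ with
  | zero =>
    obtain rfl : γ = 0 := funext fun a => sum_eq_zero_iff.1 h a (mem_univ a)
    have hempty (w : Fin 0 → A) : content w = 0 := funext fun a => by simp [content]
    simp [inversionPoly, hempty, inversions, qFac]
  | succ N ih =>
    calc inversionPoly (Fin (N + 1)) γ * ∏ a, qFac (γ a)
        = ∑ a with γ a ≠ 0, X ^ (∑ b with b < a, γ b) * qNat (γ a) *
            (inversionPoly (Fin N) (γ - Pi.single a 1) *
              ∏ b, qFac ((γ - Pi.single a 1 : A → ℕ) b)) := by
          rw [inversionPoly_succ, sum_mul]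
          refine sum_congr rfl fun a ha => ?_
          rw [prod_qFac_eq_qNat_mul γ (mem_filter.1 ha).2]
          ring
      _ = ∑ a, X ^ (∑ b with b < a, γ b) * qNat (γ a) * qFac N := by
          rw [sum_filter]
          refine sum_congr rfl fun a _ => ?_
          split_ifs with ha
          · rw [ih _ (by have := sum_sub_single_one ha; omega)]
          · simp [not_not.1 ha]
      _ = qFac (N + 1) := by rw [← sum_mul, sum_X_pow_mul_qNat, h, qFac_succ, mul_comm]

lemma qMultinom_eq_inversionPoly {m N : ℕ} (γ : Fin m → ℕ) (h : ∑ k, γ k = N) :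
    qMultinom N γ = inversionPoly (Fin N) γ := by
  rw [qMultinom, ← inversionPoly_mul_prod_qFac γ h, mul_comm]
  exact mul_divByMonic_cancel_left _ (monic_prod_of_monic _ _ fun k _ => qFac_monic _)

end Cons

section SigmaLex

variable {ι : Type*} {κ : ι → Type*} [LinearOrder ι] [∀ i, LinearOrder (κ i)]

lemma toLex_mk_lt_toLex_mk_of_lt {i j : ι} (h : i < j) (p : κ i) (q : κ j) :
    toLex (⟨i, p⟩ : Σ i, κ i) < toLex ⟨j, q⟩ :=
  Sigma.Lex.left _ _ h

lemma toLex_mk_lt_toLex_mk_iff {i : ι} {p q : κ i} :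
    toLex (⟨i, p⟩ : Σ i, κ i) < toLex ⟨i, q⟩ ↔ p < q := by
  rw [Sigma.Lex.lt_def]
  exact ⟨fun h => (h.resolve_left (lt_irrefl i)).2, fun h => .inr ⟨rfl, h⟩⟩

end SigmaLex

section Blocks

variable {ι A : Type*} {κ : ι → Type*} [Fintype ι] [∀ i, Fintype (κ i)]

lemma sum_lex {M : Type*} [AddCommMonoid M] (f : (Σₗ i, κ i) → M) :
    ∑ x, f x = ∑ i, ∑ p, f (toLex ⟨i, p⟩) := by
  rw [← toLex.sum_comp, Fintype.sum_sigma]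

def blockWord (w : (Σₗ i, κ i) → A) (i : ι) (p : κ i) : A := w (toLex ⟨i, p⟩)

lemma content_eq_sum_content_blockWord [DecidableEq A] (w : (Σₗ i, κ i) → A) :
    content w = ∑ i, content (blockWord w i) := by
  funext a
  simp only [content, card_filter, Finset.sum_apply, sum_lex]
  rfl

variable [LinearOrder ι] [LinearOrder A] [Fintype A]

def crossInversions (c : ι → A → ℕ) : ℕ := ∑ r, ∑ s with s < r, ∑ a, ∑ b with a < b, c r a * c s b

variable [∀ i, LinearOrder (κ i)]

lemma inversions_sigmaLex (w : (Σₗ i, κ i) → A) :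
    inversions w =
      ∑ i, inversions (blockWord w i) + crossInversions fun i => content (blockWord w i) := by
  set F : ι → ι → ℕ := fun i j => ∑ p : κ i, ∑ q : κ j,
    if toLex (⟨i, p⟩ : Σ i, κ i) < toLex ⟨j, q⟩ ∧ blockWord w j q < blockWord w i p then 1 else 0
  have hsplit : inversions w = ∑ i, ∑ j, F i j := by
    simp only [inversions, card_filter, Fintype.sum_prod_type, sum_lex, F]
    exact sum_congr rfl fun i _ => sum_comm
  have hdiag (i : ι) : F i i = inversions (blockWord w i) := by
    simp only [F, inversions, card_filter, Fintype.sum_prod_type, toLex_mk_lt_toLex_mk_iff]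
  have hlt {i j : ι} (h : i < j) :
      F i j = ∑ p, ∑ q, if blockWord w j q < blockWord w i p then 1 else 0 := by
    simp only [F, toLex_mk_lt_toLex_mk_of_lt h, true_and]
  have hgt {i j : ι} (h : j < i) : F i j = 0 := by
    have hnot (p : κ i) (q : κ j) : ¬toLex (⟨i, p⟩ : Σ i, κ i) < toLex ⟨j, q⟩ := fun hpq =>
      lt_asymm hpq (toLex_mk_lt_toLex_mk_of_lt h q p)
    simp [F, hnot]
  have hrow (i : ι) : ∑ j, F i j = F i i + ∑ j with i < j, F i j := by
    rw [sum_filter, ← add_sum_erase _ _ (mem_univ i),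
      ← add_sum_erase _ (fun j => if i < j then F i j else 0) (mem_univ i), if_neg (lt_irrefl i),
      zero_add]
    refine congrArg _ (sum_congr rfl fun j hj => ?_)
    rcases (ne_of_mem_erase hj).lt_or_gt with h | h
    · rw [if_neg h.not_gt, hgt h]
    · rw [if_pos h]
  rw [hsplit, sum_congr rfl fun i _ => hrow i, sum_add_distrib, sum_congr rfl fun i _ => hdiag i,
    crossInversions]
  simp only [sum_filter]
  rw [sum_comm (s := univ) (t := univ) (f := fun r s => if s < r then _ else 0)]
  refine congrArg _ (sum_congr rfl fun i _ => sum_congr rfl fun j _ => ?_)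
  split_ifs with h
  · rw [hlt h, sum_sum_ite_lt_eq_sum_content_mul, sum_congr rfl fun a _ => sum_filter _ _]
  · rfl

lemma sum_X_pow_inversions_of_content_blockWord (c : ι → A → ℕ) :
    ∑ w : (Σₗ i, κ i) → A with ∀ i, content (blockWord w i) = c i, X ^ inversions w =
      (∏ i, inversionPoly (κ i) (c i)) * X ^ crossInversions c := by
  calc ∑ w : (Σₗ i, κ i) → A with ∀ i, content (blockWord w i) = c i, X ^ inversions w
      = ∑ w : (Σₗ i, κ i) → A with ∀ i, content (blockWord w i) = c i,
          (∏ i, X ^ inversions (blockWord w i)) * X ^ crossInversions c := by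
        refine sum_congr rfl fun w hw => ?_
        rw [inversions_sigmaLex, pow_add, prod_pow_eq_pow_sum, funext (mem_filter.1 hw).2]
    _ = (∑ W ∈ Fintype.piFinset fun i => {v : κ i → A | content v = c i},
          ∏ i, X ^ inversions (W i)) * X ^ crossInversions c := by
        rw [sum_mul]
        refine sum_nbij' blockWord (fun W x => W (ofLex x).1 (ofLex x).2)
          (fun w hw => ?_) (fun W hW => ?_) (fun _ _ => rfl) (fun _ _ => rfl) (fun _ _ => rfl)
        · simpa [Fintype.mem_piFinset] using hw
        · simp only [mem_filter, mem_univ, true_and]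
          exact fun i => (mem_filter.1 (Fintype.mem_piFinset.1 hW i)).2
    _ = (∏ i, inversionPoly (κ i) (c i)) * X ^ crossInversions c := by
        simp only [inversionPoly, prod_univ_sum]

lemma inversionPoly_sigmaLex_eq_sum (β : A → ℕ) (G : Finset (ι → A → ℕ))
    (hmem : ∀ w : (Σₗ i, κ i) → A, content w = β → (fun i => content (blockWord w i)) ∈ G)
    (hsum : ∀ c ∈ G, ∑ i, c i = β) :
    inversionPoly (Σₗ i, κ i) β =
      ∑ c ∈ G, (∏ i, inversionPoly (κ i) (c i)) * X ^ crossInversions c := by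
  rw [inversionPoly, ← sum_fiberwise_of_maps_to fun w hw => hmem w (mem_filter.1 hw).2]
  refine sum_congr rfl fun c hc => ?_
  rw [← sum_X_pow_inversions_of_content_blockWord, filter_filter]
  refine sum_congr (filter_congr fun w _ => ?_) fun _ _ => rfl
  rw [← funext_iff, content_eq_sum_content_blockWord]
  exact ⟨And.right, fun h => ⟨h ▸ hsum c hc, h⟩⟩

end Blocks

lemma pow_crossInversions {ι A M : Type*} [Fintype ι] [LinearOrder ι] [Fintype A] [LinearOrder A]
    [CommMonoid M] (x : M) (c : ι → A → ℕ) :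
    x ^ crossInversions c = ∏ r, ∏ s, if s < r then
      ∏ a, ∏ b, (if a < b then x ^ (c r a * c s b) else 1) else 1 := by
  simp only [crossInversions, ← prod_pow_eq_pow_sum, prod_filter]

theorem qMultinom_vandermonde_general
    (n ℓ m : ℕ) (α : Fin ℓ → ℕ) (β : Fin m → ℕ)
    (hα : ∑ r, α r = n)
    (hβ : ∑ k, β k = n) :
    qMultinom n β =
      ∑ g ∈ Finset.univ.filter
          (fun g : Fin ℓ → Fin m → Fin (n + 1) =>
            (∀ r, ∑ k, ((g r k : ℕ)) = α r) ∧ ∀ k, ∑ r, ((g r k : ℕ)) = β k),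
        (∏ r : Fin ℓ, qMultinom (α r) (fun k => ((g r k : ℕ)))) *
          ∏ r : Fin ℓ, ∏ s : Fin ℓ,
            if s < r then
              ∏ i : Fin m, ∏ j : Fin m,
                if i < j then (X : Polynomial ℤ) ^ (((g r i : ℕ)) * ((g s j : ℕ)))
                else 1
            else 1 := by
  set G := univ.filter fun g : Fin ℓ → Fin m → Fin (n + 1) =>
    (∀ r, ∑ k, ((g r k : ℕ)) = α r) ∧ ∀ k, ∑ r, ((g r k : ℕ)) = β k
  have hcard : Fintype.card (Σₗ r, Fin (α r)) = n := by simp [hα]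
  have hmem (w : (Σₗ r, Fin (α r)) → Fin m) (hw : content w = β) :
      (fun r => content (blockWord w r)) ∈ G.image fun g r k => (g r k : ℕ) := by
    have hlt (r : Fin ℓ) (k : Fin m) : content (blockWord w r) k < n + 1 := by
      have h₁ := content_le_card (blockWord w r) k
      have h₂ : α r ≤ n := hα ▸ single_le_sum (fun _ _ => Nat.zero_le _) (mem_univ r)
      simp only [Fintype.card_fin] at h₁
      omega
    refine mem_image.2
      ⟨fun r k => ⟨_, hlt r k⟩, mem_filter.2 ⟨mem_univ _, fun r => ?_, fun k => ?_⟩, rfl⟩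
    · simpa using sum_content (blockWord w r)
    · rw [← hw, content_eq_sum_content_blockWord, Finset.sum_apply]
  have hsum : ∀ c ∈ G.image fun g r k => (g r k : ℕ), ∑ r, c r = β := by
    simp only [mem_image]
    rintro _ ⟨g, hg, rfl⟩
    exact funext fun k => (Finset.sum_apply k _ _).trans ((mem_filter.1 hg).2.2 k)
  rw [qMultinom_eq_inversionPoly β hβ, inversionPoly_congr (Fintype.orderIsoFinOfCardEq _ hcard),
    inversionPoly_sigmaLex_eq_sum β _ hmem hsum,
    sum_image fun g _ g' _ h => funext₂ fun r k => Fin.ext (congrFun₂ h r k)]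
  refine sum_congr rfl fun g hg => ?_
  rw [pow_crossInversions]
  congr 1
  exact prod_congr rfl fun r _ => (qMultinom_eq_inversionPoly _ ((mem_filter.1 hg).2.1 r)).symm

/-- **Generalized q-Vandermonde identity for multinomials.** For compositions `α`
(into `ℓ` parts) and `β` (into `m` parts) of `n`,
`[n;β]_q = Σ ∏_r [α_r; β^{(r)}]_q · ∏_{s<r} ∏_{i<j} q^{β^{(r)}_i β^{(s)}_j}`,
summed over tuples of weak compositions `β^{(r)}` of `α_r` into `m` parts with
componentwise sum `β`. -/
theorem qMultinom_vandermonde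
    (n ℓ m : ℕ) (α : Fin ℓ → ℕ) (β : Fin m → ℕ)
    (hαpos : ∀ r, 0 < α r) (hα : ∑ r, α r = n)
    (hβpos : ∀ k, 0 < β k) (hβ : ∑ k, β k = n) :
    qMultinom n β =
      ∑ g ∈ Finset.univ.filter
          (fun g : Fin ℓ → Fin m → Fin (n + 1) =>
            (∀ r, ∑ k, ((g r k : ℕ)) = α r) ∧ ∀ k, ∑ r, ((g r k : ℕ)) = β k),
        (∏ r : Fin ℓ, qMultinom (α r) (fun k => ((g r k : ℕ)))) *
          ∏ r : Fin ℓ, ∏ s : Fin ℓ,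
            if s < r then
              ∏ i : Fin m, ∏ j : Fin m,
                if i < j then (X : Polynomial ℤ) ^ (((g r i : ℕ)) * ((g s j : ℕ)))
                else 1
            else 1 :=
  qMultinom_vandermonde_general n ℓ m α β hα hβ

end CSP
end
end

section
/- Let α = (α_1,…,α_ℓ) be a composition of n and m ≥ 1. For each r, let C_r be a cyclic subgroup of the symmetric group S_{α_r} and ω_r : C_r → ℂ^× an injective group homomorphism, and assume the following cyclic sieving hypothesis: for every weak composition γ of α_r into m parts and every c ∈ C_r, the number of chains of subsets S_1 ⊆ S_2 ⊆ ⋯ ⊆ S_m = {1,…,α_r} with |S_k| = γ_1+⋯+γ_k that are setwise fixed by c equals the Gaussian multinomial [α_r; γ]_t evaluated at t = ω_r(c). Embed S_{α_1}×⋯×S_{α_ℓ} into S_n by letting the r-th factor permute the r-th consecutive block of size α_r in {1,…,n}. Then for every composition β of n into m parts and every (c_1,…,c_ℓ) ∈ C_1 × ⋯ × C_ℓ, the number of chains of subsets T_1 ⊆ ⋯ ⊆ T_m = {1,…,n} with |T_k| = β_1+⋯+β_k that are setwise fixed by the image of (c_1,…,c_ℓ) in S_n equals Y_{α,β} evaluated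 at t_r = ω_r(c_r), where Y_{α,β}(t_1,…,t_ℓ) := Σ ∏_{r=1}^ℓ [α_r; β^{(r)}]_{t_r}, the sum being over all tuples (β^{(1)},…,β^{(ℓ)}) of weak compositions of α_1,…,α_ℓ into m parts with componentwise sum β. -/
/-!
A chain `S_1 ⊆ ⋯ ⊆ S_m = X` with `|S_k| = γ_1 + ⋯ + γ_k` is the same thing as its level map
`X → Fin m`, `x ↦ min {k | x ∈ S_k}`, whose fibres have sizes `γ`, and the chain is fixed by a
permutation exactly when its level map is invariant. When `X` is a disjoint union of blocks and
the permutation acts blockwise, an invariant level map is a tuple of invariant level maps on the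
blocks; sorting these tuples by the fibre sizes `β^{(r)}` of the blocks writes the number of fixed
chains of type `β` as `Σ ∏_r` (fixed chains of type `β^{(r)}` in block `r`), and the cyclic sieving
hypothesis evaluates each factor.
-/

open scoped Classical

noncomputable section

namespace CSP

open Polynomial

variable {n ℓ m : ℕ}

/-- The offset of the `r`-th consecutive block of sizes `α` in `{0,…,n-1}`. -/
def offset (α : Fin ℓ → ℕ) (r : Fin ℓ) : ℕ :=
  ∑ r' ∈ Finset.univ.filter (fun r' => r' < r), α r'

open Finset

section Flags

variable {X : Type*} [Fintype X]

def fixedLevelMaps (p : Equiv.Perm X) (γ : Fin m → ℕ) : Set (X → Fin m) :=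
  {f | (∀ k, (univ.filter (fun x => f x = k)).card = γ k) ∧ ∀ x, f (p x) = f x}

def sublevelFlag (f : X → Fin m) (k : Fin m) : Finset X := univ.filter (fun x => f x ≤ k)

lemma partialSums_injective :
    Function.Injective fun (γ : Fin m → ℕ) (k : Fin m) => ∑ k' ∈ univ.filter (· ≤ k), γ k' := by
  intro γ δ h
  funext k
  induction k using WellFoundedLT.induction with
  | _ k ih =>
    have hk := congrFun h k
    simp only [filter_ge_eq_Iic, ← Iio_insert, sum_insert notMem_Iio_self] at hk
    rw [sum_congr rfl fun k' hk' => ih k' (mem_Iio.mp hk')] at hk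
    exact Nat.add_right_cancel hk

lemma card_sublevelFlag (f : X → Fin m) (k : Fin m) :
    (sublevelFlag f k).card =
      ∑ k' ∈ univ.filter (· ≤ k), (univ.filter (fun x => f x = k')).card := by
  rw [sublevelFlag, card_eq_sum_card_fiberwise (f := f) (t := univ.filter (· ≤ k))]
  · simp only [filter_filter]
    refine sum_congr rfl fun k' hk' => congrArg card (filter_congr fun x _ => ?_)
    constructor
    · exact fun h => h.2
    · rintro rfl; exact ⟨(mem_filter.mp hk').2, rfl⟩
  · intro x hx
    simpa using hx

lemma sublevelFlag_injective : Function.Injective (sublevelFlag : (X → Fin m) → _) := by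
  intro f g h
  funext x
  have hle : ∀ k, f x ≤ k ↔ g x ≤ k := fun k => by
    simpa [sublevelFlag] using congrArg (x ∈ ·) (congrFun h k)
  exact le_antisymm ((hle _).mpr le_rfl) ((hle _).mp le_rfl)

lemma exists_sublevelFlag_eq {S : Fin m → Finset X} (hS : Monotone S)
    (hcover : ∀ x, ∃ k, x ∈ S k) : ∃ f : X → Fin m, sublevelFlag f = S := by
  have hne : ∀ x, (univ.filter (x ∈ S ·)).Nonempty := fun x =>
    let ⟨k, hk⟩ := hcover x; ⟨k, mem_filter.mpr ⟨mem_univ k, hk⟩⟩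
  refine ⟨fun x => (univ.filter (x ∈ S ·)).min' (hne x), funext fun k => ?_⟩
  ext x
  simp only [sublevelFlag, mem_filter, mem_univ, true_and]
  constructor
  · exact fun h => hS h (mem_filter.mp (min'_mem _ (hne x))).2
  · exact fun h => min'_le _ _ (mem_filter.mpr ⟨mem_univ k, h⟩)

variable [DecidableEq X]

def fixedFlags (p : Equiv.Perm X) (γ : Fin m → ℕ) : Set (Fin m → Finset X) :=
  {S | Monotone S ∧ (∀ k, (S k).card = ∑ k' ∈ univ.filter (fun k' => k' ≤ k), γ k') ∧
    ∀ k, (S k).image p = S k}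

lemma sublevelFlag_comp_symm (f : X → Fin m) (p : Equiv.Perm X) (k : Fin m) :
    sublevelFlag (f ∘ p.symm) k = (sublevelFlag f k).image p := by
  ext x
  simp only [sublevelFlag, mem_filter, mem_univ, true_and, mem_image, Function.comp_apply]
  exact ⟨fun h => ⟨p.symm x, h, p.apply_symm_apply x⟩, fun ⟨y, hy, hyx⟩ => by simpa [← hyx]⟩

lemma sublevelFlag_mem_fixedFlags {p : Equiv.Perm X} {γ : Fin m → ℕ} {f : X → Fin m}
    (hf : f ∈ fixedLevelMaps p γ) : sublevelFlag f ∈ fixedFlags p γ := by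
  obtain ⟨hfib, hinv⟩ := hf
  have hfp : f ∘ p.symm = f := funext fun x => by simpa using (hinv (p.symm x)).symm
  refine ⟨fun k k' hk => ?_, fun k => ?_, fun k => ?_⟩
  · exact monotone_filter_right _ fun x _ (h : f x ≤ k) => h.trans hk
  · simp only [card_sublevelFlag, hfib]
  · rw [← sublevelFlag_comp_symm, hfp]

lemma exists_mem_of_mem_fixedFlags {p : Equiv.Perm X} {γ : Fin m → ℕ}
    (hγ : ∑ k, γ k = Fintype.card X) {S : Fin m → Finset X} (hS : S ∈ fixedFlags p γ) (x : X) :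
    ∃ k, x ∈ S k := by
  cases m with
  | zero => exact ((Fintype.card_eq_zero_iff.mp (by simpa using hγ.symm)).false x).elim
  | succ m =>
    refine ⟨Fin.last m, ?_⟩
    rw [(S (Fin.last m)).eq_univ_of_card ?_]
    · exact mem_univ x
    · rw [hS.2.1, ← hγ, filter_true_of_mem fun k _ => Fin.le_last k]

lemma image_sublevelFlag_fixedLevelMaps (p : Equiv.Perm X) (γ : Fin m → ℕ)
    (hγ : ∑ k, γ k = Fintype.card X) :
    sublevelFlag '' fixedLevelMaps p γ = fixedFlags p γ := by
  refine subset_antisymm (Set.image_subset_iff.mpr fun f hf => sublevelFlag_mem_fixedFlags hf) ?_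
  intro S hS
  obtain ⟨f, rfl⟩ := exists_sublevelFlag_eq hS.1 (exists_mem_of_mem_fixedFlags hγ hS)
  refine ⟨f, ⟨fun k => ?_, fun x => ?_⟩, rfl⟩
  · refine congrFun (partialSums_injective (funext fun k => ?_) :
      (fun k => (univ.filter (fun x => f x = k)).card) = γ) k
    simp only [← card_sublevelFlag, hS.2.1]
  · have hfp : f ∘ p.symm = f := sublevelFlag_injective (funext fun k => by
      rw [sublevelFlag_comp_symm, hS.2.2])
    simpa using (congrFun hfp (p x)).symm

lemma card_fixedFlags (p : Equiv.Perm X) (γ : Fin m → ℕ) (hγ : ∑ k, γ k = Fintype.card X) :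
    Nat.card (fixedFlags p γ) = Nat.card (fixedLevelMaps p γ) := by
  rw [← image_sublevelFlag_fixedLevelMaps p γ hγ,
    Nat.card_image_of_injective sublevelFlag_injective]

end Flags

lemma card_pi_eq_sum_prod_card_fiber {ι κ : Type*} [Fintype ι] [Fintype κ] {Z : ι → Type*}
    [∀ r, Fintype (Z r)] (t : ∀ r, Z r → κ) (Q : ∀ r, Z r → Prop) (Φ : (ι → κ) → Prop) :
    Nat.card {F : ∀ r, Z r // Φ (fun r => t r (F r)) ∧ ∀ r, Q r (F r)} =
      ∑ g ∈ univ.filter Φ, ∏ r, Nat.card {z // t r z = g r ∧ Q r z} := by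
  rw [Nat.card_eq_fintype_card, Fintype.card_subtype,
    card_eq_sum_card_fiberwise (f := fun F r => t r (F r)) (t := univ.filter Φ)]
  · refine sum_congr rfl fun g hg => ?_
    have hfiber : {F ∈ univ.filter (fun F : ∀ r, Z r => Φ (fun r => t r (F r)) ∧ ∀ r, Q r (F r)) |
        (fun r => t r (F r)) = g} = univ.filter (fun F => ∀ r, t r (F r) = g r ∧ Q r (F r)) := by
      ext F
      simp only [mem_filter, mem_univ, true_and, funext_iff]
      constructor
      · rintro ⟨⟨-, hQ⟩, ht⟩ r; exact ⟨ht r, hQ r⟩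
      · intro h
        have ht : (fun r => t r (F r)) = g := funext fun r => (h r).1
        exact ⟨⟨ht ▸ (mem_filter.mp hg).2, fun r => (h r).2⟩, fun r => (h r).1⟩
    rw [hfiber, ← Fintype.card_subtype, ← Nat.card_eq_fintype_card,
      Nat.card_congr (Equiv.subtypePiEquivPi (p := fun r z => t r z = g r ∧ Q r z)), Nat.card_pi]
  · intro F hF
    simpa using (mem_filter.mp hF).2.1

section Blocks

variable {ι : Type*} [Fintype ι] {X : ι → Type*} [∀ r, Fintype (X r)] {Y : Type*} [Fintype Y]

lemma card_fixedLevelMaps_sigma (e : (Σ r, X r) ≃ Y) (p : ∀ r, Equiv.Perm (X r))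
    (σ : Equiv.Perm Y) (hσ : ∀ z, σ (e z) = e ⟨z.1, p z.1 z.2⟩) (β : Fin m → ℕ) {N : ℕ}
    (hN : Fintype.card Y ≤ N) :
    Nat.card (fixedLevelMaps σ β) =
      ∑ g ∈ univ.filter (fun g : ι → Fin m → Fin (N + 1) =>
          (∀ r, ∑ k, (g r k : ℕ) = Fintype.card (X r)) ∧ ∀ k, ∑ r, (g r k : ℕ) = β k),
        ∏ r, Nat.card (fixedLevelMaps (p r) (fun k => g r k)) := by
  have hcard : ∀ r, ∀ f : X r → Fin m, ∀ k, #(univ.filter fun x => f x = k) < N + 1 := by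
    intro r f k
    have hXY : Fintype.card (X r) ≤ Fintype.card Y :=
      Fintype.card_le_of_injective (fun x => e ⟨r, x⟩) fun x y h => by simpa using h
    exact Nat.lt_succ_of_le ((card_filter_le _ _).trans (hXY.trans hN))
  let t (r : ι) (f : X r → Fin m) (k : Fin m) : Fin (N + 1) := ⟨_, hcard r f k⟩
  let blocks : (Y → Fin m) ≃ ∀ r, X r → Fin m :=
    (e.symm.arrowCongr (Equiv.refl _)).trans (Equiv.piCurry fun _ _ => Fin m)
  let Φ (g : ι → Fin m → Fin (N + 1)) : Prop :=
    (∀ r, ∑ k, (g r k : ℕ) = Fintype.card (X r)) ∧ ∀ k, ∑ r, (g r k : ℕ) = β k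
  have hblocks_apply : ∀ f r x, blocks f r x = f (e ⟨r, x⟩) := fun _ _ _ => rfl
  have hblocks : ∀ f, f ∈ fixedLevelMaps σ β ↔
      Φ (fun r => t r (blocks f r)) ∧ ∀ r x, blocks f r (p r x) = blocks f r x := by
    intro f
    have hfiber : ∀ k, #(univ.filter fun y => f y = k) =
        ∑ r, #(univ.filter fun x => f (e ⟨r, x⟩) = k) := fun k => by
      rw [card_equiv e.symm (t := univ.filter fun z => f (e z) = k) fun y => by simp]
      simp only [card_filter, Fintype.sum_sigma]
    have htotal : ∀ r, ∑ k, #(univ.filter fun x => f (e ⟨r, x⟩) = k) = Fintype.card (X r) :=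
      fun r => (card_eq_sum_card_fiberwise fun _ _ => mem_coe.mpr (mem_univ _)).symm
    have hinv : (∀ y, f (σ y) = f y) ↔ ∀ r x, f (e ⟨r, p r x⟩) = f (e ⟨r, x⟩) := by
      simp only [e.surjective.forall, hσ, Sigma.forall]
    simp only [fixedLevelMaps, Set.mem_ofPred_eq, Φ, t, hblocks_apply, hfiber, htotal, hinv,
      implies_true, true_and]
  rw [Nat.card_congr (blocks.subtypeEquiv (q := fun F => Φ (fun r => t r (F r)) ∧
    ∀ r x, F r (p r x) = F r x) hblocks),
    card_pi_eq_sum_prod_card_fiber t (fun r f => ∀ x, f (p r x) = f x) Φ]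
  refine sum_congr (by ext; simp only [mem_filter, Φ]) fun g _ =>
    prod_congr rfl fun r _ => Nat.card_congr (Equiv.subtypeEquivRight fun f => ?_)
  simp only [fixedLevelMaps, Set.mem_ofPred_eq, funext_iff, Fin.ext_iff, t]

variable [∀ r, DecidableEq (X r)] [DecidableEq Y]

lemma card_fixedFlags_sigma (e : (Σ r, X r) ≃ Y) (p : ∀ r, Equiv.Perm (X r))
    (σ : Equiv.Perm Y) (hσ : ∀ z, σ (e z) = e ⟨z.1, p z.1 z.2⟩) (β : Fin m → ℕ)
    (hβ : ∑ k, β k = Fintype.card Y) {N : ℕ} (hN : Fintype.card Y ≤ N) :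
    Nat.card (fixedFlags σ β) =
      ∑ g ∈ univ.filter (fun g : ι → Fin m → Fin (N + 1) =>
          (∀ r, ∑ k, (g r k : ℕ) = Fintype.card (X r)) ∧ ∀ k, ∑ r, (g r k : ℕ) = β k),
        ∏ r, Nat.card (fixedFlags (p r) (fun k => g r k)) := by
  rw [card_fixedFlags σ β hβ, card_fixedLevelMaps_sigma e p σ hσ β hN]
  exact sum_congr rfl fun g hg => prod_congr rfl fun r _ =>
    (card_fixedFlags _ _ ((mem_filter.mp hg).2.1 r)).symm

end Blocks

def blockEquiv (α : Fin ℓ → ℕ) (hα : ∑ r, α r = n) : (Σ r, Fin (α r)) ≃ Fin n :=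
  finSigmaFinEquiv.trans (finCongr hα)

lemma blockEquiv_val (α : Fin ℓ → ℕ) (hα : ∑ r, α r = n) (z : Σ r, Fin (α r)) :
    (blockEquiv α hα z : ℕ) = offset α z.1 + z.2 := by
  rw [blockEquiv, Equiv.trans_apply, finCongr_apply, Fin.val_cast, finSigmaFinEquiv_apply, offset]
  congr 1
  refine (sum_map _ (Fin.castLEEmb z.1.2.le) α).symm.trans (congrArg (Finset.sum · α) ?_)
  ext i
  simp only [mem_map, mem_univ, true_and, mem_filter, Fin.castLEEmb_apply]
  exact ⟨fun ⟨a, ha⟩ => ha ▸ a.2, fun h => ⟨⟨i, h⟩, rfl⟩⟩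

theorem subset_flags_cyclic_sieving_general
    (α : Fin ℓ → ℕ) (hα : ∑ r, α r = n)
    (C : ∀ r, Subgroup (Equiv.Perm (Fin (α r))))
    (ω : ∀ r, (C r) →* ℂˣ)
    (hCSP : ∀ (r : Fin ℓ) (γ : Fin m → ℕ), (∑ k, γ k = α r) → ∀ c : C r,
      (Nat.card {S : Fin m → Finset (Fin (α r)) //
          Monotone S ∧
          (∀ k : Fin m, (S k).card = ∑ k' ∈ Finset.univ.filter (fun k' => k' ≤ k), γ k') ∧
          ∀ k, (S k).image ((c : Equiv.Perm (Fin (α r))) : Fin (α r) → Fin (α r)) = S k}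
        : ℂ) =
        Polynomial.aeval (((ω r c : ℂˣ) : ℂ)) (qMultinom (α r) γ))
    (β : Fin m → ℕ) (hβ : ∑ k, β k = n)
    (c : ∀ r, C r) (σ : Equiv.Perm (Fin n))
    (hσ : ∀ (r : Fin ℓ) (x : Fin n) (y : Fin (α r)),
      (x : ℕ) = offset α r + (y : ℕ) →
        (σ x : ℕ) = offset α r + (((c r : Equiv.Perm (Fin (α r))) y : ℕ))) :
    (Nat.card {T : Fin m → Finset (Fin n) //
        Monotone T ∧
        (∀ k : Fin m, (T k).card = ∑ k' ∈ Finset.univ.filter (fun k' => k' ≤ k), β k') ∧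
        ∀ k, (T k).image (σ : Fin n → Fin n) = T k} : ℂ) =
      ∑ g ∈ Finset.univ.filter
          (fun g : Fin ℓ → Fin m → Fin (n + 1) =>
            (∀ r, ∑ k, ((g r k : ℕ)) = α r) ∧ ∀ k, ∑ r, ((g r k : ℕ)) = β k),
        ∏ r : Fin ℓ,
          Polynomial.aeval (((ω r (c r) : ℂˣ) : ℂ))
            (qMultinom (α r) (fun k => ((g r k : ℕ)))) := by
  let p (r : Fin ℓ) : Equiv.Perm (Fin (α r)) := c r
  have hblock : ∀ z, σ (blockEquiv α hα z) = blockEquiv α hα ⟨z.1, p z.1 z.2⟩ := fun z =>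
    Fin.ext ((hσ z.1 _ z.2 (blockEquiv_val α hα z)).trans
      (blockEquiv_val α hα ⟨z.1, p z.1 z.2⟩).symm)
  have hcount := card_fixedFlags_sigma (blockEquiv α hα) p σ hblock β
    (by rw [hβ, Fintype.card_fin]) (Fintype.card_fin n).le
  change (Nat.card (fixedFlags σ β) : ℂ) = _
  rw [hcount]
  push_cast
  exact sum_congr (by ext; simp [Fintype.card_fin]) fun g hg =>
    prod_congr rfl fun r _ => hCSP r _ ((mem_filter.mp hg).2.1 r) (c r)

/-- **"q=1" cyclic sieving for flags of subsets.** Assume each cyclic subgroup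
`C_r ≤ S_{α_r}` satisfies the CSP for chains of subsets of `{1,…,α_r}` with the
Gaussian multinomials `[α_r;γ]_t` (via `ω_r`). Let `σ ∈ S_n` be the image of
`(c_1,…,c_ℓ)` under the blockwise embedding `S_{α_1}×⋯×S_{α_ℓ} ↪ S_n`. Then the
number of chains of subsets of `{1,…,n}` of type `β` fixed setwise by `σ` equals
`Y_{α,β}` evaluated at `t_r = ω_r(c_r)`, with
`Y_{α,β}(t) = Σ ∏_r [α_r; β^{(r)}]_{t_r}` summed over tuples of weak compositions
`β^{(r)}` of `α_r` with componentwise sum `β`. -/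
theorem subset_flags_cyclic_sieving
    (α : Fin ℓ → ℕ) (hαpos : ∀ r, 0 < α r) (hα : ∑ r, α r = n) (hm : 0 < m)
    (C : ∀ r, Subgroup (Equiv.Perm (Fin (α r)))) (hC : ∀ r, IsCyclic (C r))
    (ω : ∀ r, (C r) →* ℂˣ) (hω : ∀ r, Function.Injective (ω r))
    (hCSP : ∀ (r : Fin ℓ) (γ : Fin m → ℕ), (∑ k, γ k = α r) → ∀ c : C r,
      (Nat.card {S : Fin m → Finset (Fin (α r)) //
          Monotone S ∧
          (∀ k : Fin m, (S k).card = ∑ k' ∈ Finset.univ.filter (fun k' => k' ≤ k), γ k') ∧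
          ∀ k, (S k).image ((c : Equiv.Perm (Fin (α r))) : Fin (α r) → Fin (α r)) = S k}
        : ℂ) =
        Polynomial.aeval (((ω r c : ℂˣ) : ℂ)) (qMultinom (α r) γ))
    (β : Fin m → ℕ) (hβpos : ∀ k, 0 < β k) (hβ : ∑ k, β k = n)
    (c : ∀ r, C r) (σ : Equiv.Perm (Fin n))
    (hσ : ∀ (r : Fin ℓ) (x : Fin n) (y : Fin (α r)),
      (x : ℕ) = offset α r + (y : ℕ) →
        (σ x : ℕ) = offset α r + (((c r : Equiv.Perm (Fin (α r))) y : ℕ))) :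
    (Nat.card {T : Fin m → Finset (Fin n) //
        Monotone T ∧
        (∀ k : Fin m, (T k).card = ∑ k' ∈ Finset.univ.filter (fun k' => k' ≤ k), β k') ∧
        ∀ k, (T k).image (σ : Fin n → Fin n) = T k} : ℂ) =
      ∑ g ∈ Finset.univ.filter
          (fun g : Fin ℓ → Fin m → Fin (n + 1) =>
            (∀ r, ∑ k, ((g r k : ℕ)) = α r) ∧ ∀ k, ∑ r, ((g r k : ℕ)) = β k),
        ∏ r : Fin ℓ,
          Polynomial.aeval (((ω r (c r) : ℂˣ) : ℂ))
            (qMultinom (α r) (fun k => ((g r k : ℕ)))) :=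
  subset_flags_cyclic_sieving_general α hα C ω hCSP β hβ c σ hσ

end CSP
end
end
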